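/- arXiv:math/0207306 — 12 statements merged into one kernel-verified Lean document; each statement's English description precedes it below -/
import Mathlib

section
/- If p is a prime with p ≡ 1 (mod 4n) for a positive integer n, then there exist rational numbers x, y with p = n·x² + y². -/
/-!
Legendre's method. Since `p ≡ 1 (mod 4q)` for every prime `q ∣ n`, quadratic reciprocity makes
each such `q`, and also `-1`, a square mod `p`; hence `-n ≡ s²` for some `s`. Pigeonhole gives a
nonzero integer triple `(a, b, c)` with `a² ≤ pn`, `b² < p`, `c² < n`, `a ≡ s b (mod p)` and
`a ≡ c (mod n)`. Then `pn` divides `a² + n b² - p c²`, which lies strictly between `-pn` and `2pn`,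
so `a² + n b² = p (c² + n k²)` with `k ∈ {0, 1}`. Brahmagupta's identity divides out `c² + n k²`.
-/

theorem isSquare_natCast_of_forall_prime_dvd {R : Type*} [CommSemiring R] (n : ℕ)
    (h : ∀ q, q.Prime → q ∣ n → IsSquare (q : R)) : IsSquare (n : R) := by
  induction n using induction_on_primes with
  | zero => simp
  | one => simp
  | prime_mul q m hq ih =>
    push_cast
    exact (h q hq (dvd_mul_right q m)).mul (ih fun r hr hrm => h r hr (hrm.mul_left q))

theorem ZMod.isSquare_primeCast_of_modEq_one {p q : ℕ} [Fact p.Prime] (hq : q.Prime)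
    (hpq : p ≡ 1 [MOD 4 * q]) : IsSquare (q : ZMod p) := by
  obtain rfl | hq2 := eq_or_ne q 2
  · have h8 : p % 8 = 1 := hpq
    exact_mod_cast (ZMod.exists_sq_eq_two_iff (by omega)).mpr (Or.inl h8)
  · have h4 : p % 4 = 1 := hpq.of_mul_right q
    have : Fact q.Prime := ⟨hq⟩
    rw [ZMod.exists_sq_eq_prime_iff_of_mod_four_eq_one h4 hq2,
      (ZMod.natCast_eq_natCast_iff p 1 q).mpr (hpq.of_mul_left 4), Nat.cast_one]
    exact IsSquare.one

theorem ZMod.isSquare_neg_natCast_of_modEq_one {p n : ℕ} [Fact p.Prime]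
    (hpn : p ≡ 1 [MOD 4 * n]) : IsSquare (-(n : ZMod p)) := by
  have h4 : p % 4 = 1 := hpn.of_mul_right n
  have hneg : IsSquare (-1 : ZMod p) := ZMod.exists_sq_eq_neg_one_iff.mpr (by omega)
  have hn : IsSquare (n : ZMod p) := isSquare_natCast_of_forall_prime_dvd n fun q hq hqn =>
    ZMod.isSquare_primeCast_of_modEq_one hq (hpn.of_dvd (mul_dvd_mul_left 4 hqn))
  simpa using hneg.mul hn

theorem Fin.val_sub_sq_le {m : ℕ} (i j : Fin (m + 1)) : ((i : ℤ) - j) ^ 2 ≤ m ^ 2 := by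
  have hi := i.is_le
  have hj := j.is_le
  exact sq_le_sq' (by omega) (by omega)

theorem Nat.le_sqrt_pred_add_one_sq (m : ℕ) : m ≤ (Nat.sqrt (m - 1) + 1) ^ 2 := by
  have := Nat.lt_succ_sqrt' (m - 1)
  rw [Nat.succ_eq_add_one] at this
  omega

theorem Nat.sqrt_pred_sq_lt {m : ℕ} (hm : m ≠ 0) : Nat.sqrt (m - 1) ^ 2 < m := by
  have := Nat.sqrt_le' (m - 1)
  omega

theorem Nat.mul_lt_prod_sqrt_add_one (p n : ℕ) :
    p * n < (Nat.sqrt (p * n) + 1) * (Nat.sqrt (p - 1) + 1) * (Nat.sqrt (n - 1) + 1) := by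
  refine lt_of_pow_lt_pow_left₀ 2 (Nat.zero_le _) ?_
  calc (p * n) ^ 2 = p * n * (p * n) := sq _
    _ < (Nat.sqrt (p * n) + 1) ^ 2 * ((Nat.sqrt (p - 1) + 1) ^ 2 * (Nat.sqrt (n - 1) + 1) ^ 2) :=
      Nat.mul_lt_mul_of_lt_of_le (Nat.lt_succ_sqrt' _)
        (Nat.mul_le_mul (Nat.le_sqrt_pred_add_one_sq p) (Nat.le_sqrt_pred_add_one_sq n))
        (by positivity)
    _ = _ := by ring

theorem exists_small_nontrivial_triple (p n : ℕ) [NeZero p] [NeZero n] (s : ZMod p) :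
    ∃ a b c : ℤ, (a ≠ 0 ∨ b ≠ 0 ∨ c ≠ 0) ∧ a ^ 2 ≤ p * n ∧ b ^ 2 < p ∧ c ^ 2 < n ∧
      (a : ZMod p) = s * b ∧ (a : ZMod n) = c := by
  set A := Nat.sqrt (p * n)
  set B := Nat.sqrt (p - 1)
  set C := Nat.sqrt (n - 1)
  let f : Fin (A + 1) × Fin (B + 1) × Fin (C + 1) → ZMod p × ZMod n :=
    fun x => ((x.1 : ℕ) - s * (x.2.1 : ℕ), ((x.1 : ℕ) : ZMod n) - (x.2.2 : ℕ))
  obtain ⟨x, y, hxy, hf⟩ := Fintype.exists_ne_map_eq_of_card_lt f (by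
    simpa [mul_assoc] using Nat.mul_lt_prod_sqrt_add_one p n)
  obtain ⟨hfp, hfn⟩ := Prod.ext_iff.mp hf
  refine ⟨(x.1 : ℤ) - y.1, (x.2.1 : ℤ) - y.2.1, (x.2.2 : ℤ) - y.2.2, ?_, ?_, ?_, ?_, ?_, ?_⟩
  · contrapose! hxy
    ext <;> omega
  · exact (Fin.val_sub_sq_le _ _).trans (by exact_mod_cast Nat.sqrt_le' (p * n))
  · exact (Fin.val_sub_sq_le _ _).trans_lt (by exact_mod_cast Nat.sqrt_pred_sq_lt (NeZero.ne p))
  · exact (Fin.val_sub_sq_le _ _).trans_lt (by exact_mod_cast Nat.sqrt_pred_sq_lt (NeZero.ne n))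
  · push_cast
    linear_combination hfp
  · push_cast
    linear_combination hfn

theorem mul_dvd_sq_add_mul_sq_sub_mul_sq {p n : ℕ} (hcop : p.Coprime n) {s : ZMod p}
    (hs : s * s = -n) (hpn : (p : ZMod n) = 1) {a b c : ℤ} (hab : (a : ZMod p) = s * b)
    (hac : (a : ZMod n) = c) : (p * n : ℤ) ∣ a ^ 2 + n * b ^ 2 - p * c ^ 2 := by
  refine (Nat.isCoprime_iff_coprime.mpr hcop).mul_dvd ?_ ?_
  · rw [← ZMod.intCast_zmod_eq_zero_iff_dvd]
    push_cast
    rw [hab, ZMod.natCast_self]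
    linear_combination (b : ZMod p) ^ 2 * hs
  · rw [← ZMod.intCast_zmod_eq_zero_iff_dvd]
    push_cast
    rw [hac, hpn, ZMod.natCast_self]
    ring

/-- Brahmagupta's identity: the values of `m x² + y²` are closed under multiplication and
division. -/
theorem exists_eq_mul_sq_add_sq_of_mul_eq {K : Type*} [Field K] {m p a b c e : K}
    (h : p * (c ^ 2 + m * e ^ 2) = a ^ 2 + m * b ^ 2) (hD : c ^ 2 + m * e ^ 2 ≠ 0) :
    ∃ x y : K, p = m * x ^ 2 + y ^ 2 := by
  refine ⟨(b * c - a * e) / (c ^ 2 + m * e ^ 2), (a * c + m * b * e) / (c ^ 2 + m * e ^ 2), ?_⟩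
  field_simp
  linear_combination (c ^ 2 + m * e ^ 2) * h

/-- Goldbach–Euler: if `p ≡ 1 (mod 4n)` is prime, then `p = n·x² + y²` with `x, y` rational. -/
theorem euler_goldbach_rational_representation (n : ℕ) (hn : 0 < n) (p : ℕ)
    (hp : p.Prime) (hcong : p % (4 * n) = 1) :
    ∃ x y : ℚ, (p : ℚ) = n * x ^ 2 + y ^ 2 := by
  have : Fact p.Prime := ⟨hp⟩
  have : NeZero n := ⟨hn.ne'⟩
  have hmod : p ≡ 1 [MOD 4 * n] := hcong.trans (Nat.one_mod_eq_one.mpr (by omega)).symm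
  obtain ⟨s, hs⟩ := ZMod.isSquare_neg_natCast_of_modEq_one hmod
  have hpn : (p : ZMod n) = 1 := by
    exact_mod_cast (ZMod.natCast_eq_natCast_iff p 1 n).mpr (hmod.of_mul_left 4)
  have hcop : p.Coprime n := (ZMod.isUnit_iff_coprime p n).mp (hpn ▸ isUnit_one)
  obtain ⟨a, b, c, hne, ha, hb, hc, hap, han⟩ := exists_small_nontrivial_triple p n s
  obtain ⟨k, hk⟩ := mul_dvd_sq_add_mul_sq_sub_mul_sq hcop hs.symm hpn hap han
  have hk01 : k = 0 ∨ k = 1 := by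
    have : -1 < k := by nlinarith
    have : k < 2 := by nlinarith
    omega
  have hkk : k ^ 2 = k := by rcases hk01 with rfl | rfl <;> norm_num
  have hD : c ^ 2 + n * k ^ 2 ≠ 0 := by
    intro hD
    obtain rfl : c = 0 := by nlinarith
    obtain rfl : k = 0 := by nlinarith
    obtain rfl : a = 0 := by nlinarith
    obtain rfl : b = 0 := by nlinarith
    simp at hne
  have hform : (p : ℤ) * (c ^ 2 + n * k ^ 2) = a ^ 2 + n * b ^ 2 := by
    linear_combination -hk + p * n * hkk
  exact exists_eq_mul_sq_add_sq_of_mul_eq (a := (a : ℚ)) (b := b) (c := c) (e := k)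
    (by exact_mod_cast hform) (by exact_mod_cast hD)
end

section
/- The equation x² − 79y² = 101 has no solution in integers x, y. -/
lemma lagrange_aux : ∀ y : ℕ, ∀ x : ℤ, x ^ 2 - 79 * (y : ℤ) ^ 2 = 101 → False := by
  intro y
  induction y using Nat.strong_induction_on with
  | _ y ih =>
    intro x hx
    -- WLOG x ≥ 0
    have ha : (0:ℤ) ≤ |x| := abs_nonneg x
    have hx' : |x| ^ 2 - 79 * (y : ℤ) ^ 2 = 101 := by rw [sq_abs]; exact hx
    set a : ℤ := |x| with hadef
    by_cases h : y ≤ 7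
    · have h1 : a ^ 2 = 101 + 79 * (y:ℤ)^2 := by linarith
      have hy : (y:ℤ) ≤ 7 := by exact_mod_cast h
      have hy0 : (0:ℤ) ≤ (y:ℤ) := by positivity
      have hb : a ≤ 63 := by nlinarith
      have hn : a.toNat * a.toNat = 101 + 79 * (y * y) := by
        have := Int.toNat_of_nonneg ha
        zify; rw [this]; nlinarith
      have hbn : a.toNat ≤ 63 := by omega
      set n := a.toNat
      interval_cases y <;> interval_cases n <;> omega
    · push_neg at h
      have hy8 : (8:ℤ) ≤ (y:ℤ) := by exact_mod_cast h
      set x' : ℤ := 80 * a - 711 * (y:ℤ) with hx'def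
      set y' : ℤ := 80 * (y:ℤ) - 9 * a with hy'def
      have h1 : x' ^ 2 - 79 * y' ^ 2 = 101 := by
        rw [hx'def, hy'def]; linear_combination hx'
      have hlow : 79 * (y:ℤ) < 9 * a := by nlinarith
      have hhigh : 9 * a < 81 * (y:ℤ) := by nlinarith
      have h2 : y'.natAbs < y := by omega
      apply ih y'.natAbs h2 x'
      have : ((y'.natAbs : ℤ))^2 = y'^2 := by
        simp [sq, Int.natAbs_mul_self]
      rw [this]; exact h1

/-- Lagrange's counterexample: `x² − 79y² = 101` has no integer solution. -/
theorem no_integer_solution_lagrange :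
    ¬ ∃ x y : ℤ, x ^ 2 - 79 * y ^ 2 = 101 := by
  rintro ⟨x, y, h⟩
  apply lagrange_aux y.natAbs x
  have : ((y.natAbs : ℤ))^2 = y^2 := by simp [sq, Int.natAbs_mul_self]
  rw [this]; exact h
end

section
/- If a prime p is written as p = x² − a y² with integers x, y (a a nonzero integer), then there exist integers n, r with p = 4an + r² or p = 4an + r² − a. -/
/-- Euler: if a prime `p` equals `x² − a·y²` in integers, then `p = 4an + r²`
or `p = 4an + r² − a` for some integers `n, r`. -/
theorem euler_residue_form (a : ℤ) (ha : a ≠ 0) (p : ℕ) (hp : p.Prime)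
    (x y : ℤ) (h : (p : ℤ) = x ^ 2 - a * y ^ 2) :
    ∃ n r : ℤ, (p : ℤ) = 4 * a * n + r ^ 2 ∨ (p : ℤ) = 4 * a * n + r ^ 2 - a := by
  rcases Int.even_or_odd y with ⟨q, hq⟩ | ⟨q, hq⟩
  · exact ⟨-q ^ 2, x, Or.inl (by rw [h, hq]; ring)⟩
  · exact ⟨-(q ^ 2 + q), x, Or.inr (by rw [h, hq]; ring)⟩
end

section
/- Every prime p not dividing 20 that properly divides some value x² + 5y² with gcd(x,y) = 1 satisfies p mod 20 ∈ {1, 3, 7, 9}. -/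
/-!
If `p ∣ x² + 5y²` with `x, y` coprime, then `p ∤ y` and `(x/y)² ≡ -5 (mod p)`, so the symbol
`(-5 / p)` equals `1`. By quadratic reciprocity the Jacobi symbol `(-5 / b)` depends only on
`b mod 20`, and among the odd residues it equals `1` exactly at `1, 3, 7, 9`.
-/

theorem jacobiSym_eq_one_of_dvd_sq_sub_mul_sq {p : ℕ} [Fact p.Prime] {a x y : ℤ}
    (ha : a.gcd p = 1) (hxy : x.gcd y = 1) (hdvd : (p : ℤ) ∣ x ^ 2 - a * y ^ 2) :
    jacobiSym a p = 1 := by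
  refine (jacobiSym.eq_one_or_neg_one ha).resolve_right fun hneg => ?_
  obtain ⟨hx, hy⟩ := jacobiSym.prime_dvd_of_eq_neg_one hneg hdvd
  exact (Fact.out : p.Prime).not_dvd_one
    (Int.natCast_dvd_natCast.mp (hxy ▸ Int.dvd_coe_gcd hx hy))

theorem mod_twenty_of_jacobiSym_neg_five_eq_one {b : ℕ} (hb : Odd b) (h : jacobiSym (-5) b = 1) :
    b % 20 = 1 ∨ b % 20 = 3 ∨ b % 20 = 7 ∨ b % 20 = 9 := by
  rw [jacobiSym.mod_right _ hb, show 4 * (-5 : ℤ).natAbs = 20 from rfl] at h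
  have hr_odd : b % 20 % 2 = 1 := by have := Nat.odd_iff.mp hb; omega
  have hr_lt : b % 20 < 20 := Nat.mod_lt b (by norm_num)
  generalize b % 20 = r at *
  interval_cases r <;> first | omega | norm_num at h

/-- Euler: a prime `p ∤ 20` properly dividing some `x² + 5y²` lies in one of the
residue classes `1, 3, 7, 9 mod 20`. -/
theorem divisors_of_x2_plus_5y2 (p : ℕ) (hp : p.Prime) (hp20 : ¬ p ∣ 20)
    (h : ∃ x y : ℤ, Int.gcd x y = 1 ∧ (p : ℤ) ∣ x ^ 2 + 5 * y ^ 2) :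
    p % 20 = 1 ∨ p % 20 = 3 ∨ p % 20 = 7 ∨ p % 20 = 9 := by
  obtain ⟨x, y, hxy, hdvd⟩ := h
  have : Fact p.Prime := ⟨hp⟩
  have hp_odd : Odd p := hp.odd_of_ne_two (by rintro rfl; norm_num at hp20)
  have h5 : (-5 : ℤ).gcd p = 1 := by
    rw [Int.neg_gcd]
    exact_mod_cast (Nat.coprime_primes (by norm_num) hp).mpr (by rintro rfl; norm_num at hp20)
  refine mod_twenty_of_jacobiSym_neg_five_eq_one hp_odd ?_
  exact jacobiSym_eq_one_of_dvd_sq_sub_mul_sq h5 hxy (by rwa [neg_mul, sub_neg_eq_add])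
end

section
/- A prime p with p ≡ 1 or 9 (mod 20) can be written as p = x² + 5y² with integers x, y, while a prime p ≡ 3 or 7 (mod 20) can be written as p = 2x² + 2xy + 3y² with integers x, y. -/
private lemma sqrt_neg5_exists (p : ℕ) (hp : p.Prime) (hp2 : p ≠ 2) (hp5 : p ≠ 5)
    (h20 : p % 20 = 1 ∨ p % 20 = 3 ∨ p % 20 = 7 ∨ p % 20 = 9) :
    ∃ a : ZMod p, a ^ 2 = -5 := by
  haveI : Fact p.Prime := ⟨hp⟩
  have hodd : Odd p := hp.odd_of_ne_two hp2
  have h5 : ((-5 : ℤ) : ZMod p) ≠ 0 := by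
    rw [Ne, ZMod.intCast_zmod_eq_zero_iff_dvd]
    intro h
    have h' : p ∣ 5 := by exact_mod_cast dvd_neg.mp h
    rcases (Nat.Prime.eq_one_or_self_of_dvd (by norm_num) p h') with h1 | h1
    · exact hp.ne_one h1
    · exact hp5 h1
  have hL : legendreSym p (-5) = 1 := by
    rw [jacobiSym.legendreSym.to_jacobiSym, jacobiSym.mod_right _ hodd]
    rcases h20 with h | h | h | h <;> norm_num [h]
  obtain ⟨a, ha⟩ := (legendreSym.eq_one_iff p h5).mp hL
  exact ⟨a, by rw [sq, ← ha]; push_cast; ring⟩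

private lemma thue_neg5 (p : ℕ) (hp : p.Prime) (a : ZMod p) (ha : a ^ 2 = -5) :
    ∃ x y k : ℤ, x ^ 2 + 5 * y ^ 2 = p * k ∧ 1 ≤ k ∧ k ≤ 5 := by
  haveI : Fact p.Prime := ⟨hp⟩
  set r := Nat.sqrt p with hr
  have hrp : r * r < p := by
    rcases Nat.lt_or_ge (r * r) p with h | h
    · exact h
    · exfalso
      have h2 : r * r ≤ p := by simpa [pow_two] using Nat.sqrt_le' p
      have heq : p = r * r := le_antisymm h h2
      rcases (Nat.Prime.eq_one_or_self_of_dvd hp r ⟨r, heq⟩) with h1 | h1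
      · rw [h1] at heq; simp at heq; exact hp.one_lt.ne' heq
      · rw [h1] at heq; nlinarith [hp.one_lt]
  have hcard : Fintype.card (ZMod p) < Fintype.card (Fin (r+1) × Fin (r+1)) := by
    rw [ZMod.card p, Fintype.card_prod, Fintype.card_fin]
    nlinarith [Nat.lt_succ_sqrt' p]
  obtain ⟨⟨i₁, j₁⟩, ⟨i₂, j₂⟩, hne, hfe⟩ :=
    Fintype.exists_ne_map_eq_of_card_lt
      (fun ij : Fin (r+1) × Fin (r+1) => (ij.1 : ZMod p) + a * (ij.2 : ZMod p)) hcard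
  simp only at hfe
  set x : ℤ := (i₁ : ℕ) - (i₂ : ℕ) with hx
  set y : ℤ := (j₂ : ℕ) - (j₁ : ℕ) with hy
  have hxy : (x : ZMod p) = a * (y : ZMod p) := by
    rw [hx, hy]
    push_cast
    linear_combination hfe
  have hN0 : ((x ^ 2 + 5 * y ^ 2 : ℤ) : ZMod p) = 0 := by
    push_cast
    rw [hxy]
    linear_combination ((y : ℤ) : ZMod p) ^ 2 * ha
  have hdvd : (p : ℤ) ∣ x ^ 2 + 5 * y ^ 2 :=
    (ZMod.intCast_zmod_eq_zero_iff_dvd _ p).mp hN0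
  have hxb : x ^ 2 ≤ (r : ℤ) * r := by
    have h1 : (i₁ : ℕ) ≤ r := Nat.lt_succ_iff.mp i₁.isLt
    have h2 : (i₂ : ℕ) ≤ r := Nat.lt_succ_iff.mp i₂.isLt
    have hl : -(r:ℤ) ≤ x := by rw [hx]; omega
    have hu : x ≤ (r:ℤ) := by rw [hx]; omega
    nlinarith
  have hyb : y ^ 2 ≤ (r : ℤ) * r := by
    have h1 : (j₁ : ℕ) ≤ r := Nat.lt_succ_iff.mp j₁.isLt
    have h2 : (j₂ : ℕ) ≤ r := Nat.lt_succ_iff.mp j₂.isLt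
    have hl : -(r:ℤ) ≤ y := by rw [hy]; omega
    have hu : y ≤ (r:ℤ) := by rw [hy]; omega
    nlinarith
  have hNpos : 0 < x ^ 2 + 5 * y ^ 2 := by
    rcases (lt_or_eq_of_le (by positivity : (0:ℤ) ≤ x ^ 2 + 5 * y ^ 2)) with h | h
    · exact h
    · exfalso
      have hx0 : x = 0 := by nlinarith [sq_nonneg x, sq_nonneg y]
      have hy0 : y = 0 := by nlinarith [sq_nonneg x, sq_nonneg y]
      apply hne
      rw [hx] at hx0
      rw [hy] at hy0
      have hi : i₁ = i₂ := by apply Fin.ext; omega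
      have hj : j₁ = j₂ := by apply Fin.ext; omega
      rw [hi, hj]
  have hNlt : x ^ 2 + 5 * y ^ 2 < 6 * p := by
    have hrr : ((r:ℤ) * r) < p := by exact_mod_cast hrp
    nlinarith
  obtain ⟨k, hk⟩ := hdvd
  have hppos : (0:ℤ) < p := by exact_mod_cast hp.pos
  refine ⟨x, y, k, hk, ?_, ?_⟩
  · by_contra h
    push_neg at h
    have : (p:ℤ) * k ≤ 0 := mul_nonpos_of_nonneg_of_nonpos (le_of_lt hppos) (by omega)
    omega
  · by_contra h
    push_neg at h
    have : (p:ℤ) * 6 ≤ (p:ℤ) * k := by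
      apply mul_le_mul_of_nonneg_left (by omega) (le_of_lt hppos)
    omega

private lemma descent_neg5 (p : ℕ) (hp : p.Prime) (x y k : ℤ)
    (hk : x ^ 2 + 5 * y ^ 2 = p * k) (h1 : 1 ≤ k) (h5 : k ≤ 5) :
    (∃ x y : ℤ, (p : ℤ) = x ^ 2 + 5 * y ^ 2) ∨
    (∃ x y : ℤ, (p : ℤ) = 2 * x ^ 2 + 2 * x * y + 3 * y ^ 2) := by
  interval_cases k
  · exact Or.inl ⟨x, y, by linarith⟩
  · -- k = 2
    right
    have hc : ((x : ZMod 2)) ^ 2 + 5 * ((y : ZMod 2)) ^ 2 = 0 := by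
      have hc' : ((x ^ 2 + 5 * y ^ 2 : ℤ) : ZMod 2) = ((p * 2 : ℤ) : ZMod 2) := by
        exact_mod_cast congrArg (Int.cast : ℤ → ZMod 2) hk
      push_cast at hc'
      rw [hc', show ((2 : ZMod 2)) = 0 by decide, mul_zero]
    have h2 : (x : ZMod 2) = (y : ZMod 2) :=
      (by decide : ∀ u v : ZMod 2, u ^ 2 + 5 * v ^ 2 = 0 → u = v) _ _ hc
    obtain ⟨a, hha⟩ : (2 : ℤ) ∣ x - y :=
      Int.ModEq.dvd ((ZMod.intCast_eq_intCast_iff x y 2).mp h2).symm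
    have hxa : x = y + 2 * a := by linarith
    refine ⟨a, y, ?_⟩
    have h2p : (2:ℤ) * p = 2 * (2 * a ^ 2 + 2 * a * y + 3 * y ^ 2) := by
      rw [hxa] at hk; linear_combination -hk
    linarith
  · -- k = 3
    right
    have hc : ((x : ZMod 3)) ^ 2 + 5 * ((y : ZMod 3)) ^ 2 = 0 := by
      have hc' : ((x ^ 2 + 5 * y ^ 2 : ℤ) : ZMod 3) = ((p * 3 : ℤ) : ZMod 3) := by
        exact_mod_cast congrArg (Int.cast : ℤ → ZMod 3) hk
      push_cast at hc'
      rw [hc', show ((3 : ZMod 3)) = 0 by decide, mul_zero]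
    have key : ∀ u v : ZMod 3, u ^ 2 + 5 * v ^ 2 = 0 → (u = 0 ∧ v = 0) ∨ u = v ∨ u = -v := by
      decide
    rcases key _ _ hc with ⟨hx0, hy0⟩ | h3 | h3
    · obtain ⟨x', hx'⟩ := (ZMod.intCast_zmod_eq_zero_iff_dvd x 3).mp hx0
      obtain ⟨y', hy'⟩ := (ZMod.intCast_zmod_eq_zero_iff_dvd y 3).mp hy0
      have hpd : (3:ℤ) ∣ (p:ℤ) := ⟨x' ^ 2 + 5 * y' ^ 2, by
        rw [hx', hy'] at hk; push_cast at hk ⊢; nlinarith [hk]⟩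
      have h3d : (3:ℕ) ∣ p := by exact_mod_cast hpd
      have hp3 : p = 3 := ((Nat.prime_dvd_prime_iff_eq (by norm_num) hp).mp h3d).symm
      exact ⟨0, 1, by rw [hp3]; norm_num⟩
    · obtain ⟨b, hb⟩ : (3 : ℤ) ∣ x - y :=
        Int.ModEq.dvd ((ZMod.intCast_eq_intCast_iff x y 3).mp h3).symm
      have hxb : x = y + 3 * b := by linarith
      refine ⟨y, b, ?_⟩
      have h3p : (3:ℤ) * p = 3 * (2 * y ^ 2 + 2 * y * b + 3 * b ^ 2) := by
        rw [hxb] at hk; linear_combination -hk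
      linarith
    · obtain ⟨b, hb⟩ : (3 : ℤ) ∣ x + y := by
        have : ((x + y : ℤ) : ZMod 3) = 0 := by push_cast; rw [h3]; ring
        exact (ZMod.intCast_zmod_eq_zero_iff_dvd _ 3).mp this
      have hxb : x = -y + 3 * b := by linarith
      refine ⟨-y, b, ?_⟩
      have h3p : (3:ℤ) * p = 3 * (2 * (-y) ^ 2 + 2 * (-y) * b + 3 * b ^ 2) := by
        rw [hxb] at hk; linear_combination -hk
      linarith
  · -- k = 4
    have hc : ((x : ZMod 4)) ^ 2 + 5 * ((y : ZMod 4)) ^ 2 = 0 := by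
      have hc' : ((x ^ 2 + 5 * y ^ 2 : ℤ) : ZMod 4) = ((p * 4 : ℤ) : ZMod 4) := by
        exact_mod_cast congrArg (Int.cast : ℤ → ZMod 4) hk
      push_cast at hc'
      rw [hc', show ((4 : ZMod 4)) = 0 by decide, mul_zero]
    have key : ∀ u v : ZMod 4, u ^ 2 + 5 * v ^ 2 = 0 →
        (u = 0 ∨ u = 2) ∧ (v = 0 ∨ v = 2) := by decide
    obtain ⟨hu, hv⟩ := key _ _ hc
    have hdx : (2:ℤ) ∣ x := by
      rcases hu with h | h
      · exact dvd_trans (by norm_num) ((ZMod.intCast_zmod_eq_zero_iff_dvd x 4).mp h)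
      · have h4 : (4:ℤ) ∣ x - 2 := by
          have h2 : (x : ZMod 4) = ((2:ℤ) : ZMod 4) := by rw [h]; norm_num
          exact Int.ModEq.dvd ((ZMod.intCast_eq_intCast_iff x 2 4).mp h2).symm
        omega
    have hdy : (2:ℤ) ∣ y := by
      rcases hv with h | h
      · exact dvd_trans (by norm_num) ((ZMod.intCast_zmod_eq_zero_iff_dvd y 4).mp h)
      · have h4 : (4:ℤ) ∣ y - 2 := by
          have h2 : (y : ZMod 4) = ((2:ℤ) : ZMod 4) := by rw [h]; norm_num
          exact Int.ModEq.dvd ((ZMod.intCast_eq_intCast_iff y 2 4).mp h2).symm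
        omega
    obtain ⟨x', hx'⟩ := hdx
    obtain ⟨y', hy'⟩ := hdy
    left
    refine ⟨x', y', ?_⟩
    have h4p : (4:ℤ) * p = 4 * (x' ^ 2 + 5 * y' ^ 2) := by
      rw [hx', hy'] at hk; linear_combination -hk
    linarith
  · -- k = 5
    have hc : ((x : ZMod 5)) ^ 2 + 5 * ((y : ZMod 5)) ^ 2 = 0 := by
      have hc' : ((x ^ 2 + 5 * y ^ 2 : ℤ) : ZMod 5) = ((p * 5 : ℤ) : ZMod 5) := by
        exact_mod_cast congrArg (Int.cast : ℤ → ZMod 5) hk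
      push_cast at hc'
      rw [hc', show ((5 : ZMod 5)) = 0 by decide, mul_zero]
    have hx0 : (x : ZMod 5) = 0 := by
      have h50 : (5 : ZMod 5) = 0 := by decide
      have hsq : (x : ZMod 5) ^ 2 = 0 := by rw [← hc, h50]; ring
      exact (by decide : ∀ u : ZMod 5, u ^ 2 = 0 → u = 0) _ hsq
    obtain ⟨x', hx'⟩ := (ZMod.intCast_zmod_eq_zero_iff_dvd x 5).mp hx0
    left
    refine ⟨y, x', ?_⟩
    have h5p : (5:ℤ) * p = 5 * (y ^ 2 + 5 * x' ^ 2) := by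
      rw [hx'] at hk; push_cast at hk; linear_combination -hk
    linarith

private lemma form1_resid (p : ℕ) (h : ∃ x y : ℤ, (p : ℤ) = x ^ 2 + 5 * y ^ 2)
    (hm : p % 20 = 3 ∨ p % 20 = 7) : False := by
  obtain ⟨x, y, hxy⟩ := h
  have hc : (p : ZMod 20) = (x : ZMod 20) ^ 2 + 5 * (y : ZMod 20) ^ 2 := by
    have := congrArg (Int.cast : ℤ → ZMod 20) hxy
    push_cast at this
    exact this
  have hpc : (p : ZMod 20) = ((p % 20 : ℕ) : ZMod 20) := by
    conv_lhs => rw [← Nat.mod_add_div p 20]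
    push_cast
    rw [show ((20 : ZMod 20)) = 0 by decide, zero_mul, add_zero]
  rcases hm with h | h <;> rw [h] at hpc <;> rw [hpc] at hc <;>
    exact (by decide : ∀ u v : ZMod 20, ¬ _ = u ^ 2 + 5 * v ^ 2) _ _ hc

private lemma form2_resid (p : ℕ) (h : ∃ x y : ℤ, (p : ℤ) = 2 * x ^ 2 + 2 * x * y + 3 * y ^ 2)
    (hm : p % 20 = 1 ∨ p % 20 = 9) : False := by
  obtain ⟨x, y, hxy⟩ := h
  have hc : (p : ZMod 20) = 2 * (x : ZMod 20) ^ 2 + 2 * (x : ZMod 20) * (y : ZMod 20)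
      + 3 * (y : ZMod 20) ^ 2 := by
    have := congrArg (Int.cast : ℤ → ZMod 20) hxy
    push_cast at this
    exact this
  have hpc : (p : ZMod 20) = ((p % 20 : ℕ) : ZMod 20) := by
    conv_lhs => rw [← Nat.mod_add_div p 20]
    push_cast
    rw [show ((20 : ZMod 20)) = 0 by decide, zero_mul, add_zero]
  rcases hm with h | h <;> rw [h] at hpc <;> rw [hpc] at hc <;>
    exact (by decide : ∀ u v : ZMod 20, ¬ _ = 2 * u ^ 2 + 2 * u * v + 3 * v ^ 2) _ _ hc

/-- The two genera of discriminant `−20`: a prime `p ≡ 1, 9 (mod 20)` is `x² + 5y²`,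
while a prime `p ≡ 3, 7 (mod 20)` is `2x² + 2xy + 3y²`. -/
theorem primes_represented_disc_neg20 (p : ℕ) (hp : p.Prime) (hp2 : p ≠ 2) (hp5 : p ≠ 5) :
    ((p % 20 = 1 ∨ p % 20 = 9) → ∃ x y : ℤ, (p : ℤ) = x ^ 2 + 5 * y ^ 2) ∧
    ((p % 20 = 3 ∨ p % 20 = 7) → ∃ x y : ℤ, (p : ℤ) = 2 * x ^ 2 + 2 * x * y + 3 * y ^ 2) := by
  constructor
  · intro h
    obtain ⟨a, ha⟩ := sqrt_neg5_exists p hp hp2 hp5 (by tauto)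
    obtain ⟨x, y, k, hk, h1, h5⟩ := thue_neg5 p hp a ha
    rcases descent_neg5 p hp x y k hk h1 h5 with h' | h'
    · exact h'
    · exact absurd (form2_resid p h' h) not_false
  · intro h
    obtain ⟨a, ha⟩ := sqrt_neg5_exists p hp hp2 hp5 (by tauto)
    obtain ⟨x, y, k, hk, h1, h5⟩ := thue_neg5 p hp a ha
    rcases descent_neg5 p hp x y k hk h1 h5 with h' | h'
    · exact absurd (form1_resid p h' h) not_false
    · exact h'
end

section
/- Let F = (a, b, c) be a primitive binary quadratic form of determinant D = b² − ac, and let p be an odd prime dividing D. Then for any two integers m, n not divisible by p that are both represented by F, m·n is a quadratic residue modulo p. -/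
/-- Gauss, DA §229: for a primitive form `(a,b,c)` of determinant `D = b² − ac` and an odd
prime `p ∣ D`, any two numbers represented by the form and prime to `p` have product a
quadratic residue mod `p`. -/
theorem gauss_da229 (a b c : ℤ) (hprim : Int.gcd a (Int.gcd b c) = 1)
    (p : ℕ) [Fact p.Prime] (hp2 : p ≠ 2) (hpD : (p : ℤ) ∣ b ^ 2 - a * c)
    (m n : ℤ)
    (hm : ∃ x y : ℤ, m = a * x ^ 2 + 2 * b * x * y + c * y ^ 2)
    (hn : ∃ x y : ℤ, n = a * x ^ 2 + 2 * b * x * y + c * y ^ 2)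
    (hpm : ¬ (p : ℤ) ∣ m) (hpn : ¬ (p : ℤ) ∣ n) :
    IsSquare ((m * n : ℤ) : ZMod p) := by
  obtain ⟨x, y, hm⟩ := hm
  obtain ⟨x', y', hn⟩ := hn
  have key : m * n = (a * x * x' + b * (x * y' + x' * y) + c * y * y') ^ 2
      - (b ^ 2 - a * c) * (x * y' - x' * y) ^ 2 := by
    subst hm hn; ring
  have hD : ((b ^ 2 - a * c : ℤ) : ZMod p) = 0 := by
    exact_mod_cast (ZMod.intCast_zmod_eq_zero_iff_dvd _ p).2 hpD
  refine ⟨((a * x * x' + b * (x * y' + x' * y) + c * y * y' : ℤ) : ZMod p), ?_⟩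
  have : ((m * n : ℤ) : ZMod p)
      = ((a * x * x' + b * (x * y' + x' * y) + c * y * y' : ℤ) : ZMod p) ^ 2
        - ((b ^ 2 - a * c : ℤ) : ZMod p) * ((x * y' - x' * y : ℤ) : ZMod p) ^ 2 := by
    rw [key]; push_cast; ring
  rw [this, hD]; ring
end

section
/- If D ≡ 3 (mod 4) and F = (a,b,c) is a binary quadratic form of determinant D with 2b even coefficient convention, then any two odd integers represented primitively by F are congruent modulo 4. -/
lemma zmod4_key : ∀ a b c x y u v : ZMod 4,
    b ^ 2 - a * c = 3 →
    ((a * x ^ 2 + 2 * b * x * y + c * y ^ 2 = 1) ∨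
     (a * x ^ 2 + 2 * b * x * y + c * y ^ 2 = 3)) →
    ((a * u ^ 2 + 2 * b * u * v + c * v ^ 2 = 1) ∨
     (a * u ^ 2 + 2 * b * u * v + c * v ^ 2 = 3)) →
    a * x ^ 2 + 2 * b * x * y + c * y ^ 2 = a * u ^ 2 + 2 * b * u * v + c * v ^ 2 := by
  decide

lemma odd_cast_zmod4 (m : ℤ) (h : Odd m) : (m : ZMod 4) = 1 ∨ (m : ZMod 4) = 3 := by
  obtain ⟨k, hk⟩ := h
  subst hk
  push_cast
  have : ∀ k : ZMod 4, 2 * k + 1 = 1 ∨ 2 * k + 1 = 3 := by decide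
  exact this _

/-- Gauss's supplementary character mod 4: if `D = b² − ac ≡ 3 (mod 4)`, then any two odd
integers primitively represented by `(a,b,c)` are congruent mod 4. -/
theorem odd_representations_congruent_mod_four (a b c : ℤ) (hD : (b ^ 2 - a * c) % 4 = 3)
    (m n : ℤ) (hmodd : Odd m) (hnodd : Odd n)
    (hm : ∃ x y : ℤ, IsCoprime x y ∧ m = a * x ^ 2 + 2 * b * x * y + c * y ^ 2)
    (hn : ∃ x y : ℤ, IsCoprime x y ∧ n = a * x ^ 2 + 2 * b * x * y + c * y ^ 2) :
    m % 4 = n % 4 := by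
  obtain ⟨x, y, -, hmxy⟩ := hm
  obtain ⟨u, v, -, hnuv⟩ := hn
  have hD4 : ((b : ZMod 4) ^ 2 - a * c = 3) := by
    have : ((b ^ 2 - a * c : ℤ) : ZMod 4) = ((3 : ℤ) : ZMod 4) := by
      rw [ZMod.intCast_eq_intCast_iff']; push_cast; omega
    push_cast at this
    exact this
  have hm4 := odd_cast_zmod4 m hmodd
  have hn4 := odd_cast_zmod4 n hnodd
  rw [hmxy] at hm4
  rw [hnuv] at hn4
  push_cast at hm4 hn4
  have key := zmod4_key (a : ZMod 4) b c x y u v hD4 hm4 hn4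
  have : ((m : ℤ) : ZMod 4) = ((n : ℤ) : ZMod 4) := by
    rw [hmxy, hnuv]; push_cast; exact key
  rw [ZMod.intCast_eq_intCast_iff'] at this
  push_cast at this
  omega
end

section
/- For a quadratic field k of discriminant d and a fractional ideal 𝔞 of k coprime to d, if the absolute norm N𝔞 equals the norm N(α) of some element α ∈ k×, then for every prime p dividing d the Hilbert symbol (N𝔞, d)_p equals +1. -/
/-!
The discriminant of the family `1, α` is `T(α)² - 4 N(α)` (Cayley–Hamilton in degree two),
and, like the discriminant of any family of `[k : ℚ]` elements, it differs from `d` by a rational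
square `q²`. Hence `4 N(α) + d q² = T(α)²`, which already makes `N(α) x² + d y² = 1` solvable
over `ℚ`, and a fortiori over every `ℚ_p`.
-/

open NumberField Polynomial
open scoped nonZeroDivisors

theorem exists_mul_sq_add_mul_sq_eq_one {a d v q : ℚ} (ha : a ≠ 0) (hd : d ≠ 0)
    (h : v ^ 2 - 4 * a = d * q ^ 2) : ∃ x y : ℚ, a * x ^ 2 + d * y ^ 2 = 1 := by
  rcases eq_or_ne v 0 with rfl | hv
  · have hq : q ≠ 0 := by rintro rfl; apply ha; linarith
    -- `a x² + d y² = d (y - q x / 2) (y + q x / 2)`: make the two factors `1 / d` and `1`.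
    refine ⟨(1 - 1 / d) / q, (1 + 1 / d) / 2, ?_⟩
    rw [show a = -(d * q ^ 2) / 4 by linarith]
    field_simp
    ring
  · refine ⟨2 / v, q / v, ?_⟩
    field_simp
    linear_combination -h

namespace Algebra

variable {R L : Type*} [CommRing R] [Nontrivial R] [CommRing L] [Algebra R L] [Module.Free R L]
  [Module.Finite R L]

theorem sq_eq_trace_mul_sub_norm (h2 : Module.finrank R L = 2) (α : L) :
    α ^ 2 = algebraMap R L (trace R L α) * α - algebraMap R L (norm R α) := by
  let b := Module.finBasisOfFinrankEq R L h2
  have hcharpoly : (lmul R L α).charpoly = X ^ 2 - C (trace R L α) * X + C (norm R α) := by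
    rw [← LinearMap.charpoly_toMatrix _ b, Matrix.charpoly_fin_two, trace_eq_matrix_trace b,
      norm_eq_matrix_det b]
    rfl
  have hCH := aeval_self_charpoly_lmul (R := R) α
  rw [hcharpoly] at hCH
  simp only [map_add, map_sub, map_mul, aeval_X_pow, aeval_X, aeval_C] at hCH
  linear_combination hCH

theorem discr_one_pair (h2 : Module.finrank R L = 2) (α : L) :
    discr R ![1, α] = trace R L α ^ 2 - 4 * norm R α := by
  have htrace_one : trace R L 1 = 2 := by
    rw [← map_one (algebraMap R L), trace_algebraMap, h2]; simp
  have htrace_sq : trace R L (α ^ 2) = trace R L α ^ 2 - 2 * norm R α := by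
    rw [sq_eq_trace_mul_sub_norm h2, ← smul_def, ← mul_one (algebraMap R L _), ← smul_def]
    simp only [map_sub, map_smul, htrace_one, smul_eq_mul]
    ring
  rw [discr_def, Matrix.det_fin_two]
  simp [traceMatrix_apply, htrace_sq, ← sq, htrace_one]
  ring

end Algebra

theorem NumberField.exists_discr_eq_sq_mul_discr {K ι : Type*} [Field K] [NumberField K]
    [Fintype ι] [DecidableEq ι] (hι : Fintype.card ι = Module.finrank ℚ K) (v : ι → K) :
    ∃ q : ℚ, Algebra.discr ℚ v = q ^ 2 * discr K := by
  have hcard : Fintype.card (Module.Free.ChooseBasisIndex ℤ (𝓞 K)) = Fintype.card ι := by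
    rw [hι, ← Module.finrank_eq_card_chooseBasisIndex, RingOfIntegers.rank]
  let e := Fintype.equivOfCardEq hcard
  let b := (integralBasis K).reindex e
  refine ⟨(b.toMatrix v).det, ?_⟩
  conv_lhs => rw [← b.toMatrix_map_vecMul v]
  rw [Algebra.discr_of_matrix_vecMul, coe_discr, ← Algebra.discr_reindex ℚ _ e,
    ← Module.Basis.coe_reindex]

theorem hecke_principal_genus_norm_condition_general
    (k : Type*) [Field k] [NumberField k] (h2 : Module.finrank ℚ k = 2)
    (d : ℤ) (hd : d = NumberField.discr k)
    (𝔞 : FractionalIdeal (𝓞 k)⁰ k)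
    (hnorm : ∃ α : k, α ≠ 0 ∧ FractionalIdeal.absNorm 𝔞 = Algebra.norm ℚ α) :
    ∀ (p : ℕ) [Fact p.Prime], (p : ℤ) ∣ d →
      ∃ x y : ℚ_[p], (FractionalIdeal.absNorm 𝔞 : ℚ_[p]) * x ^ 2 + (d : ℚ_[p]) * y ^ 2 = 1 := by
  intro p _ _
  obtain ⟨α, hα, hN⟩ := hnorm
  obtain ⟨q, hq⟩ := exists_discr_eq_sq_mul_discr (by simp [h2]) ![1, α]
  have hdiscr : Algebra.trace ℚ k α ^ 2 - 4 * Algebra.norm ℚ α = d * q ^ 2 := by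
    rw [← Algebra.discr_one_pair h2, hq, hd]
    ring
  have hd0 : (d : ℚ) ≠ 0 := by rw [hd]; exact_mod_cast discr_ne_zero k
  obtain ⟨x, y, hxy⟩ :=
    exists_mul_sq_add_mul_sq_eq_one (Algebra.norm_ne_zero_iff.mpr hα) hd0 hdiscr
  refine ⟨x, y, ?_⟩
  rw [hN]
  exact_mod_cast congrArg (Rat.cast : ℚ → ℚ_[p]) hxy

/-- Hecke: if the absolute norm of a fractional ideal `𝔞` of a quadratic field `k`
(coprime to the discriminant `d`) is the norm of an element of `k×`, then the quadratic
Hilbert symbol `(N𝔞, d)_p` equals `+1` for every prime `p ∣ d`. -/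
theorem hecke_principal_genus_norm_condition
    (k : Type*) [Field k] [NumberField k] (h2 : Module.finrank ℚ k = 2)
    (d : ℤ) (hd : d = NumberField.discr k)
    (𝔞 : FractionalIdeal (𝓞 k)⁰ k) (h𝔞 : 𝔞 ≠ 0)
    (hcopnum : IsCoprime (FractionalIdeal.absNorm 𝔞).num d)
    (hcopden : IsCoprime ((FractionalIdeal.absNorm 𝔞).den : ℤ) d)
    (hnorm : ∃ α : k, α ≠ 0 ∧ FractionalIdeal.absNorm 𝔞 = Algebra.norm ℚ α) :
    ∀ (p : ℕ) [Fact p.Prime], (p : ℤ) ∣ d →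
      ∃ x y : ℚ_[p], (FractionalIdeal.absNorm 𝔞 : ℚ_[p]) * x ^ 2 + (d : ℚ_[p]) * y ^ 2 = 1 :=
  hecke_principal_genus_norm_condition_general k h2 d hd 𝔞 hnorm
end

section
/- Let L/K be a finite Galois extension of fields with group G, and suppose (c_σ)_{σ∈G} are elements of L× satisfying c_σ^τ · c_τ = c_{στ} for all σ, τ ∈ G. Then there exists b ∈ L× with c_σ = b^{1−σ} = b/σ(b) for all σ ∈ G. -/
open groupCohomology

theorem isMulCocycle₁_units_mk0 {K L : Type*} [Field K] [Field L] [Algebra K L]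
    (c : (L ≃ₐ[K] L) → L) (hc0 : ∀ σ, c σ ≠ 0)
    (hcocycle : ∀ σ τ : L ≃ₐ[K] L, τ (c σ) * c τ = c (τ * σ)) :
    IsMulCocycle₁ fun σ ↦ Units.mk0 (c σ) (hc0 σ) := fun σ τ ↦
  Units.ext (hcocycle τ σ).symm

theorem hilbert90_cocycle_general (K L : Type*) [Field K] [Field L] [Algebra K L]
    [FiniteDimensional K L]
    (c : (L ≃ₐ[K] L) → L) (hc0 : ∀ σ, c σ ≠ 0)
    (hcocycle : ∀ σ τ : L ≃ₐ[K] L, τ (c σ) * c τ = c (τ * σ)) :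
    ∃ b : L, b ≠ 0 ∧ ∀ σ : L ≃ₐ[K] L, c σ = b / σ b := by
  obtain ⟨β, hβ⟩ := isMulCoboundary₁_of_isMulCocycle₁_of_aut_to_units _
    (isMulCocycle₁_units_mk0 c hc0 hcocycle)
  -- Mathlib's coboundary is `σ β / β`; its inverse `b = β⁻¹` gives `b / σ b`.
  refine ⟨(β : L)⁻¹, inv_ne_zero β.ne_zero, fun σ ↦ ?_⟩
  have hσ : σ β / β = c σ := by simpa [Units.ext_iff] using hβ σ
  rw [← hσ, map_inv₀, inv_div_inv]

/-- Hilbert's Theorem 90 in cocycle form (Noether's "minimal principal genus theorem"):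
a 1-cocycle `(c_σ)` of `Gal(L/K)` with values in `L×` (i.e. `c_σ^τ · c_τ = c_{στ}`,
where `x^τ = τ(x)`) is a coboundary: `c_σ = b/σ(b)` for some `b ∈ L×`. -/
theorem hilbert90_cocycle (K L : Type*) [Field K] [Field L] [Algebra K L]
    [FiniteDimensional K L] [IsGalois K L]
    (c : (L ≃ₐ[K] L) → L) (hc0 : ∀ σ, c σ ≠ 0)
    (hcocycle : ∀ σ τ : L ≃ₐ[K] L, τ (c σ) * c τ = c (τ * σ)) :
    ∃ b : L, b ≠ 0 ∧ ∀ σ : L ≃ₐ[K] L, c σ = b / σ b :=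
  hilbert90_cocycle_general K L c hc0 hcocycle
end

section
/- Let L/K be a finite Galois extension of number fields with group G, and let D_L denote the group of fractional ideals of L. Then H¹(G, D_L) = 0. -/
/-!
`D_L` is free abelian on the prime ideals of `𝓞 L`, which `G` permutes, so a cocycle is read off
prime by prime as an integer-valued cocycle `E` on the permutation module `ℤ^{primes}`. Summing
`E (σ * τ) = E σ + σ • E τ` over `τ` gives `|G| • E σ = F - σ • F` with `F = ∑ τ, E τ`, so
`E σ P` depends only on `σ⁻¹ • P`. Choosing a representative `P₀` in each orbit and setting
`f P = E σ P` for any `σ` with `σ⁻¹ • P = P₀` gives `E σ = f - σ • f`; the finitely supported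
`f` is the valuation vector of `C / D`.
-/

open scoped Pointwise
open UniqueFactorizationMonoid

section PermutationModule

variable {G X : Type*} [Group G] [MulAction G X] {E : G → X → ℤ}

-- `G` acts on `X → ℤ` by `(σ • f) x = f (σ⁻¹ • x)`; `hE` is the cocycle identity for this action.
theorem card_mul_cocycle_apply_eq [Fintype G]
    (hE : ∀ σ τ x, E (σ * τ) x = E σ x + E τ (σ⁻¹ • x)) (σ : G) (x : X) :
    Fintype.card G * E σ x = ∑ τ, E τ x - ∑ τ, E τ (σ⁻¹ • x) := by
  have hsum : ∑ τ, E (σ * τ) x = ∑ τ, E τ x :=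
    Fintype.sum_equiv (Equiv.mulLeft σ) _ _ fun _ => rfl
  simp only [hE, Finset.sum_add_distrib, Finset.sum_const, Finset.card_univ, nsmul_eq_mul] at hsum
  linarith

theorem cocycle_apply_eq_of_inv_smul_eq [Finite G]
    (hE : ∀ σ τ x, E (σ * τ) x = E σ x + E τ (σ⁻¹ • x)) {σ τ : G} {x : X}
    (h : σ⁻¹ • x = τ⁻¹ • x) : E σ x = E τ x := by
  have := Fintype.ofFinite G
  have hσ := card_mul_cocycle_apply_eq hE σ x
  have hτ := card_mul_cocycle_apply_eq hE τ x
  rw [h] at hσ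
  exact mul_left_cancel₀ (by positivity) (hσ.trans hτ.symm)

theorem exists_eq_sub_inv_smul_of_cocycle [Finite G]
    (hE : ∀ σ τ x, E (σ * τ) x = E σ x + E τ (σ⁻¹ • x)) :
    ∃ f : X → ℤ, Function.support f ⊆ ⋃ σ, Function.support (E σ) ∧
      ∀ σ x, E σ x = f x - f (σ⁻¹ • x) := by
  let rep (x : X) : X := (Quotient.mk (MulAction.orbitRel G X) x).out
  have hrep (x : X) : ∃ g : G, g⁻¹ • x = rep x := by
    obtain ⟨g, hg⟩ := Quotient.mk_out (s := MulAction.orbitRel G X) x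
    exact ⟨g⁻¹, by simpa using hg⟩
  choose g hg using hrep
  refine ⟨fun x => E (g x) x, fun x hx => Set.mem_iUnion.2 ⟨g x, hx⟩, fun σ x => ?_⟩
  have hrep_inv_smul : rep (σ⁻¹ • x) = rep x := by
    simp only [rep]
    congr 1
    exact Quotient.sound ⟨σ⁻¹, rfl⟩
  have h : (σ * g (σ⁻¹ • x))⁻¹ • x = (g x)⁻¹ • x := by
    rw [mul_inv_rev, mul_smul, hg, hrep_inv_smul, hg]
  have := hE σ (g (σ⁻¹ • x)) x
  rw [cocycle_apply_eq_of_inv_smul_eq hE h] at this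
  linarith

end PermutationModule

section NormalizedFactors

variable {α : Type*} [CommMonoidWithZero α] [NormalizationMonoid α]
  [UniqueFactorizationMonoid α] [Subsingleton αˣ]

theorem eq_of_normalizedFactors_eq {a b : α} (ha : a ≠ 0) (hb : b ≠ 0)
    (h : normalizedFactors a = normalizedFactors b) : a = b :=
  associated_iff_eq.1 <| (prod_normalizedFactors ha).symm.trans (h ▸ prod_normalizedFactors hb)

theorem exists_count_normalizedFactors_eq [Nontrivial α] [DecidableEq α] (g : α → ℕ)
    (hg : (Function.support g).Finite) (hprime : ∀ p, g p ≠ 0 → Prime p) :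
    ∃ a ≠ 0, ∀ p, (normalizedFactors a).count p = g p := by
  set m := Finsupp.toMultiset (Finsupp.ofSupportFinite g hg)
  have hcount (p : α) : m.count p = g p := by
    rw [Finsupp.count_toMultiset, Finsupp.ofSupportFinite_coe]
  have hm : ∀ p ∈ m, Prime p := fun p hp =>
    hprime p (by rw [← hcount]; exact (Multiset.count_pos.2 hp).ne')
  refine ⟨m.prod, Multiset.prod_ne_zero_of_prime m hm, fun p => ?_⟩
  rw [normalizedFactors_prod_of_prime hm, hcount]

theorem exists_count_normalizedFactors_sub_eq [Nontrivial α] [DecidableEq α] (f : α → ℤ)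
    (hf : (Function.support f).Finite) (hprime : ∀ p, f p ≠ 0 → Prime p) :
    ∃ a b : α, a ≠ 0 ∧ b ≠ 0 ∧ ∀ p,
      ((normalizedFactors a).count p : ℤ) - (normalizedFactors b).count p = f p := by
  obtain ⟨a, ha, ha_count⟩ := exists_count_normalizedFactors_eq (fun p => (f p).toNat)
    (hf.subset fun p hp => by simp only [Function.mem_support] at hp ⊢; omega)
    (fun p hp => hprime p (by omega))
  obtain ⟨b, hb, hb_count⟩ := exists_count_normalizedFactors_eq (fun p => (-f p).toNat)
    (hf.subset fun p hp => by simp only [Function.mem_support] at hp ⊢; omega)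
    (fun p hp => hprime p (by omega))
  exact ⟨a, b, ha, hb, fun p => by rw [ha_count, hb_count, Int.toNat_sub_toNat_neg]⟩

end NormalizedFactors

namespace Ideal

variable {R G : Type*} [CommRing R] [Group G] [MulSemiringAction G R]

theorem prime_smul_iff (σ : G) {P : Ideal R} : Prime (σ • P) ↔ Prime P :=
  MulEquiv.prime_iff (MulSemiringAction.toRingEquiv G (Ideal R) σ)

variable [IsDedekindDomain R]

theorem normalizedFactors_smul (σ : G) (I : Ideal R) :
    normalizedFactors (σ • I) = (normalizedFactors I).map (σ • ·) := by
  rcases eq_or_ne I 0 with rfl | hI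
  · rw [smul_zero, normalizedFactors_zero, Multiset.map_zero]
  have hprime : ∀ P ∈ (normalizedFactors I).map (σ • ·), Prime P := by
    simp only [Multiset.mem_map, forall_exists_index, and_imp, forall_apply_eq_imp_iff₂,
      prime_smul_iff]
    exact fun P hP => prime_of_normalized_factor P hP
  rw [← normalizedFactors_prod_of_prime hprime, ← Multiset.smul_prod',
    prod_normalizedFactors_eq_self hI]

theorem count_normalizedFactors_smul [DecidableEq (Ideal R)] (σ : G) (P I : Ideal R) :
    (normalizedFactors (σ • I)).count P = (normalizedFactors I).count (σ⁻¹ • P) := by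
  conv_lhs => rw [normalizedFactors_smul, ← smul_inv_smul σ P]
  exact Multiset.count_map_eq_count' _ _ (MulAction.injective σ) _

theorem exists_coboundary_of_cocycle [Finite G] (A B : G → Ideal R)
    (hA : ∀ σ, A σ ≠ 0) (hB : ∀ σ, B σ ≠ 0)
    (hcocycle : ∀ σ τ, A (σ * τ) * B σ * σ • B τ = B (σ * τ) * A σ * σ • A τ) :
    ∃ C D : Ideal R, C ≠ 0 ∧ D ≠ 0 ∧ ∀ σ, A σ * D * σ • C = B σ * C * σ • D := by
  classical
  let E (σ : G) (P : Ideal R) : ℤ :=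
    (normalizedFactors (A σ)).count P - (normalizedFactors (B σ)).count P
  have hE : ∀ σ τ P, E (σ * τ) P = E σ P + E τ (σ⁻¹ • P) := by
    intro σ τ P
    have h := congrArg (Multiset.count P ∘ normalizedFactors) (hcocycle σ τ)
    simp only [Function.comp_apply, normalizedFactors_mul, count_normalizedFactors_smul,
      Multiset.count_add, mul_ne_zero, hA, hB, smul_eq_zero_iff_eq, ne_eq, not_false_eq_true] at h
    simp only [E]
    omega
  have hE_supp : ∀ σ, Function.support (E σ) ⊆
      {P | P ∈ normalizedFactors (A σ) + normalizedFactors (B σ)} := by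
    intro σ P hP
    by_contra hmem
    simp only [Set.mem_ofPred_eq, Multiset.mem_add, not_or] at hmem
    simp [E, Multiset.count_eq_zero.2 hmem.1, Multiset.count_eq_zero.2 hmem.2] at hP
  obtain ⟨f, hf_supp, hfE⟩ := exists_eq_sub_inv_smul_of_cocycle hE
  replace hf_supp : Function.support f ⊆
      ⋃ σ, {P | P ∈ normalizedFactors (A σ) + normalizedFactors (B σ)} :=
    hf_supp.trans (Set.iUnion_mono hE_supp)
  have hf_fin : (Function.support f).Finite :=
    (Set.finite_iUnion fun σ => Multiset.finite_toSet _).subset hf_supp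
  have hf_prime (P : Ideal R) (hP : f P ≠ 0) : Prime P := by
    obtain ⟨σ, hσ⟩ := Set.mem_iUnion.1 (hf_supp hP)
    rcases Multiset.mem_add.1 hσ with h | h <;> exact prime_of_normalized_factor P h
  obtain ⟨C, D, hC0, hD0, hCD⟩ := exists_count_normalizedFactors_sub_eq f hf_fin hf_prime
  refine ⟨C, D, hC0, hD0, fun σ => eq_of_normalizedFactors_eq
    (mul_ne_zero (mul_ne_zero (hA σ) hD0) ((smul_ne_zero_iff_ne σ).2 hC0))
    (mul_ne_zero (mul_ne_zero (hB σ) hC0) ((smul_ne_zero_iff_ne σ).2 hD0)) ?_⟩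
  ext P
  have hσP := hfE σ P
  have hP := hCD P
  have hP' := hCD (σ⁻¹ • P)
  simp only [E] at hσP
  simp only [normalizedFactors_mul, count_normalizedFactors_smul, Multiset.count_add, mul_ne_zero,
    hA, hB, hC0, hD0, smul_eq_zero_iff_eq, ne_eq, not_false_eq_true]
  omega

end Ideal

open NumberField

theorem galRestrict_apply_eq_smul (K L : Type*) [Field K] [Field L] [NumberField K]
    [NumberField L] [Algebra K L] (σ : L ≃ₐ[K] L) (x : 𝓞 L) :
    galRestrict (𝓞 K) K L (𝓞 L) σ x = σ • x :=
  RingOfIntegers.ext (algebraMap_galRestrict_apply (𝓞 K) σ x)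

theorem map_galRestrict_eq_smul (K L : Type*) [Field K] [Field L] [NumberField K]
    [NumberField L] [Algebra K L] (σ : L ≃ₐ[K] L) (I : Ideal (𝓞 L)) :
    Ideal.map (galRestrict (𝓞 K) K L (𝓞 L) σ) I = σ • I := by
  rw [Ideal.pointwise_smul_def]
  unfold Ideal.map
  congr 1
  ext x
  simp [galRestrict_apply_eq_smul]

theorem noether_principal_genus_for_ideals_general
    (K L : Type*) [Field K] [Field L] [NumberField K] [NumberField L]
    [Algebra K L]
    (A B : (L ≃ₐ[K] L) → Ideal (𝓞 L))
    (hA : ∀ σ, A σ ≠ 0) (hB : ∀ σ, B σ ≠ 0)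
    (hcocycle : ∀ σ τ : L ≃ₐ[K] L,
      A (σ * τ) * B σ * Ideal.map (galRestrict (𝓞 K) K L (𝓞 L) σ) (B τ) =
        B (σ * τ) * A σ * Ideal.map (galRestrict (𝓞 K) K L (𝓞 L) σ) (A τ)) :
    ∃ C D : Ideal (𝓞 L), C ≠ 0 ∧ D ≠ 0 ∧ ∀ σ : L ≃ₐ[K] L,
      A σ * D * Ideal.map (galRestrict (𝓞 K) K L (𝓞 L) σ) C =
        B σ * C * Ideal.map (galRestrict (𝓞 K) K L (𝓞 L) σ) D := by
  simp only [map_galRestrict_eq_smul] at hcocycle ⊢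
  exact Ideal.exists_coboundary_of_cocycle A B hA hB hcocycle

/-- Noether's "principal genus theorem for ideals": for a finite Galois extension `L/K` of
number fields with group `G`, `H¹(G, D_L) = 0`, where `D_L` is the group of nonzero
fractional ideals of `L`.  Stated concretely: every fractional ideal is a quotient `A/B` of
nonzero integral ideals, so a 1-cocycle `c : G → D_L`, `c(στ) = c(σ)·σ(c(τ))`, is given by
pairs `(A σ, B σ)` satisfying the cross-multiplied cocycle identity, and the claim is that
it is a coboundary `c(σ) = (C/D)·σ(C/D)⁻¹` for nonzero integral ideals `C, D`. -/
theorem noether_principal_genus_for_ideals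
    (K L : Type*) [Field K] [Field L] [NumberField K] [NumberField L]
    [Algebra K L] [IsGalois K L]
    (A B : (L ≃ₐ[K] L) → Ideal (𝓞 L))
    (hA : ∀ σ, A σ ≠ 0) (hB : ∀ σ, B σ ≠ 0)
    (hcocycle : ∀ σ τ : L ≃ₐ[K] L,
      A (σ * τ) * B σ * Ideal.map (galRestrict (𝓞 K) K L (𝓞 L) σ) (B τ) =
        B (σ * τ) * A σ * Ideal.map (galRestrict (𝓞 K) K L (𝓞 L) σ) (A τ)) :
    ∃ C D : Ideal (𝓞 L), C ≠ 0 ∧ D ≠ 0 ∧ ∀ σ : L ≃ₐ[K] L,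
      A σ * D * Ideal.map (galRestrict (𝓞 K) K L (𝓞 L) σ) C =
        B σ * C * Ideal.map (galRestrict (𝓞 K) K L (𝓞 L) σ) D :=
  noether_principal_genus_for_ideals_general K L A B hA hB hcocycle
end

section
/- Let m be a squarefree integer that is not a square, and suppose n is a nonzero rational number such that the quadratic Hilbert symbol (n, m)_v = +1 for every place v of ℚ (including the infinite place). Then n is the norm of an element of ℚ(√m), i.e., there exist rational x, y with n = x² − m y². -/
/-!
Legendre's descent. Scaling by squares and using the symmetry of the Hilbert symbol, we may take
squarefree integers `m`, `n` with `|m| ≤ |n|`. For `p ∣ n`, solvability of `n = x² - m y²` in `ℚ_p`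
forces `m` to be a square mod `p`, hence mod `n`, so `t² - m = n n'` with `|t| ≤ |n| / 2` and thus
`|n'| < |n|`. Since `t² - m` is a norm, `n` is a norm (over `ℚ` and over every `ℚ_v`) iff the
squarefree part of `n'` is, and induction on `|m| + |n|` ends at `|n| = 1`, where only
`m = n = -1` is not a global norm, and it is excluded by the real place.
-/

section QuadraticNorm

variable {F : Type*} [Field F]

/-- `a` is a value of the norm form `x² - m y²` of `F(√m)/F`. -/
def IsQuadraticNorm (m a : F) : Prop := ∃ x y : F, a = x ^ 2 - m * y ^ 2

theorem isQuadraticNorm_sq (m c : F) : IsQuadraticNorm m (c ^ 2) := ⟨c, 0, by ring⟩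

theorem isQuadraticNorm_sq_sub (m t : F) : IsQuadraticNorm m (t ^ 2 - m) := ⟨t, 1, by ring⟩

theorem isQuadraticNorm_one_left (h2 : (2 : F) ≠ 0) (a : F) : IsQuadraticNorm 1 a :=
  ⟨(a + 1) / 2, (a - 1) / 2, by field_simp; ring⟩

namespace IsQuadraticNorm

variable {m a b : F}

theorem mul (ha : IsQuadraticNorm m a) (hb : IsQuadraticNorm m b) :
    IsQuadraticNorm m (a * b) := by
  obtain ⟨x₁, y₁, rfl⟩ := ha
  obtain ⟨x₂, y₂, rfl⟩ := hb
  exact ⟨x₁ * x₂ + m * y₁ * y₂, x₁ * y₂ + x₂ * y₁, by ring⟩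

theorem inv (ha : IsQuadraticNorm m a) : IsQuadraticNorm m a⁻¹ := by
  rcases eq_or_ne a 0 with rfl | ha₀
  · simpa using ha
  · simpa [sq, ha₀] using ha.mul (isQuadraticNorm_sq m a⁻¹)

theorem of_mul_left (ha₀ : a ≠ 0) (ha : IsQuadraticNorm m a) (hab : IsQuadraticNorm m (a * b)) :
    IsQuadraticNorm m b := by
  simpa [ha₀] using ha.inv.mul hab

theorem iff_of_mul (hab : IsQuadraticNorm m (a * b)) (ha₀ : a ≠ 0) (hb₀ : b ≠ 0) :
    IsQuadraticNorm m a ↔ IsQuadraticNorm m b :=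
  ⟨fun ha => ha.of_mul_left ha₀ hab, fun hb => hb.of_mul_left hb₀ (mul_comm a b ▸ hab)⟩

/-- The symmetry `(n, m) = (m, n)` of the Hilbert symbol. -/
theorem symm (h2 : (2 : F) ≠ 0) (ha₀ : a ≠ 0) (ha : IsQuadraticNorm m a) :
    IsQuadraticNorm a m := by
  obtain ⟨x, y, rfl⟩ := ha
  rcases eq_or_ne y 0 with rfl | hy
  · have hx : x ≠ 0 := by rintro rfl; simp at ha₀
    exact ⟨(m + 1) / 2, (m - 1) / (2 * x), by field_simp; ring⟩
  · exact ⟨x / y, 1 / y, by field_simp; ring⟩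

end IsQuadraticNorm

theorem isQuadraticNorm_mul_sq_iff {m a c : F} (hc : c ≠ 0) :
    IsQuadraticNorm m (a * c ^ 2) ↔ IsQuadraticNorm m a :=
  ⟨fun h => by simpa [hc] using h.mul (isQuadraticNorm_sq m c⁻¹),
    fun h => h.mul (isQuadraticNorm_sq m c)⟩

end QuadraticNorm

theorem isQuadraticNorm_intCast_iff_of_sq_sub_eq_mul_sq {F : Type*} [Field F] [CharZero F]
    {m n t s d : ℤ}
    (h : t ^ 2 - m = n * (s * d ^ 2)) (hn : n ≠ 0) (hs : s ≠ 0) (hd : d ≠ 0) :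
    IsQuadraticNorm (m : F) n ↔ IsQuadraticNorm (m : F) s := by
  have hnorm : IsQuadraticNorm (m : F) (n * (s * d ^ 2)) := by
    have : (t : F) ^ 2 - m = n * (s * d ^ 2) := by exact_mod_cast h
    exact this ▸ isQuadraticNorm_sq_sub (m : F) t
  rw [IsQuadraticNorm.iff_of_mul hnorm (by exact_mod_cast hn) (by simp [hs, hd]),
    isQuadraticNorm_mul_sq_iff (by exact_mod_cast hd)]

theorem Int.exists_squarefree_mul_sq {a : ℤ} (ha : a ≠ 0) :
    ∃ s d : ℤ, Squarefree s ∧ d ≠ 0 ∧ a = s * d ^ 2 := by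
  obtain ⟨s, d, -, hd, hsd, hs⟩ := Nat.sq_mul_squarefree_of_pos (Int.natAbs_pos.mpr ha)
  refine ⟨a.sign * s, d, ?_, by omega, ?_⟩
  · rw [← Int.squarefree_natAbs, Int.natAbs_mul, Int.natAbs_sign_of_ne_zero ha, one_mul]
    exact hs
  · conv_lhs => rw [← Int.sign_mul_natAbs a, ← hsd]
    push_cast
    ring

theorem Rat.exists_squarefree_mul_sq {q : ℚ} (hq : q ≠ 0) :
    ∃ s : ℤ, Squarefree s ∧ ∃ c : ℚ, c ≠ 0 ∧ q = s * c ^ 2 := by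
  obtain ⟨s, d, hs, hd, hsd⟩ :=
    Int.exists_squarefree_mul_sq
      (mul_ne_zero (Rat.num_ne_zero.mpr hq) (Int.natCast_ne_zero.mpr q.den_nz))
  refine ⟨s, hs, d / q.den, by simp [hd], ?_⟩
  have : (q.num : ℚ) * q.den = s * d ^ 2 := by exact_mod_cast hsd
  rw [div_pow, mul_div, ← this]
  field_simp
  exact Rat.mul_den_eq_num q

theorem ZMod.isSquare_intCast_of_squarefree {N : ℕ} (hN : Squarefree N) (m : ℤ)
    (h : ∀ p ∈ N.primeFactors, IsSquare (m : ZMod p)) : IsSquare (m : ZMod N) := by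
  have hprod : ∏ p : N.primeFactors, (p : ℕ) = N :=
    (Finset.prod_coe_sort _ _).trans (Nat.prod_primeFactors_of_squarefree hN)
  have hcop : Pairwise fun p q : N.primeFactors => Nat.Coprime p q := fun p q hpq =>
    (Nat.coprime_primes (Nat.prime_of_mem_primeFactors p.2)
      (Nat.prime_of_mem_primeFactors q.2)).mpr (Subtype.coe_injective.ne hpq)
  rw [← hprod]
  choose r hr using fun p : N.primeFactors => h p p.2
  let e := ZMod.prodEquivPi _ hcop
  refine ⟨e.symm r, e.injective (funext fun p => ?_)⟩
  rw [map_mul, e.apply_symm_apply, map_intCast]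
  exact hr p

theorem Int.exists_sq_sub_eq_mul_of_isSquare {m n : ℤ} (hm : Squarefree m) (hm1 : m ≠ 1)
    (hmn : m.natAbs ≤ n.natAbs) (hn : 2 ≤ n.natAbs) (h : IsSquare (m : ZMod n.natAbs)) :
    ∃ t n' : ℤ, t ^ 2 - m = n * n' ∧ n' ≠ 0 ∧ n'.natAbs < n.natAbs := by
  obtain ⟨r, hr⟩ := h
  have : NeZero n.natAbs := ⟨by omega⟩
  have ht : 2 * r.valMinAbs.natAbs ≤ n.natAbs := by
    have := r.natAbs_valMinAbs_le; omega
  obtain ⟨n', hn'⟩ : n ∣ r.valMinAbs ^ 2 - m := by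
    rw [← Int.natAbs_dvd, ← ZMod.intCast_zmod_eq_zero_iff_dvd]
    push_cast
    rw [hr, sq, sub_self]
  refine ⟨r.valMinAbs, n', hn', fun hn'0 => hm1 ?_, ?_⟩
  · have ht : r.valMinAbs ^ 2 = m := by linear_combination hn' + n * hn'0
    rw [← ht, Int.isUnit_sq (hm _ ⟨1, by rw [← ht]; ring⟩)]
  · zify at ht hmn hn ⊢
    have habs : |n| * |n'| ≤ |r.valMinAbs| ^ 2 + |m| := by
      rw [← abs_mul, ← hn', ← sq_abs]
      exact (abs_sub _ _).trans (by rw [abs_pow, sq_abs])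
    nlinarith [abs_nonneg r.valMinAbs]

namespace Padic

variable {p : ℕ} [Fact p.Prime]

theorem norm_p_ne_norm_sq (a : ℚ_[p]) : ‖(p : ℚ_[p])‖ ≠ ‖a‖ ^ 2 := by
  have hp : (1 : ℝ) < p := mod_cast (Fact.out : p.Prime).one_lt
  rcases eq_or_ne a 0 with rfl | ha
  · simp [norm_p, (Fact.out : p.Prime).ne_zero]
  rw [norm_p, norm_eq_zpow_neg_valuation ha, ← zpow_natCast, ← zpow_mul, ← zpow_neg_one,
    Ne, zpow_right_inj₀ (by linarith) hp.ne']
  omega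

theorem norm_intCast_eq_norm_p_of_squarefree {n : ℤ} (hn : Squarefree n) (hpn : (p : ℤ) ∣ n) :
    ‖(n : ℚ_[p])‖ = ‖(p : ℚ_[p])‖ := by
  obtain ⟨n₀, rfl⟩ := hpn
  have hp := Nat.prime_iff_prime_int.mp (Fact.out : p.Prime)
  have hn₀ : ¬ (p : ℤ) ∣ n₀ := fun ⟨k, hk⟩ => hp.not_isUnit (hn p ⟨k, by rw [hk]; ring⟩)
  have : ‖(n₀ : ℚ_[p])‖ = 1 :=
    norm_intCast_eq_one_iff.mpr ((hp.irreducible.coprime_iff_not_dvd).mpr hn₀).symm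
  rw [Int.cast_mul, norm_mul, this, mul_one, Int.cast_natCast]

/-- Writing `u = x / y`, the norm of `u² - m` can be neither `‖u‖² > 1` nor `1`, as `‖p‖` is not
the square of a norm. -/
theorem isSquare_toZMod_of_norm_eq_norm_p {m : ℤ_[p]} {x y : ℚ_[p]}
    (h : ‖x ^ 2 - m * y ^ 2‖ = ‖(p : ℚ_[p])‖) : IsSquare (PadicInt.toZMod m) := by
  have hy : y ≠ 0 := by
    rintro rfl
    exact norm_p_ne_norm_sq x (by simpa using h.symm)
  have hxy : x ^ 2 - m * y ^ 2 = ((x / y) ^ 2 - m) * y ^ 2 := by field_simp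
  have hu : ‖x / y‖ ≤ 1 := by
    by_contra! hu
    have hm : ‖(m : ℚ_[p])‖ < ‖(x / y) ^ 2‖ := by
      rw [norm_pow]; nlinarith [m.norm_le_one, PadicInt.padic_norm_e_of_padicInt m]
    have : ‖(x / y) ^ 2 - m‖ = ‖x / y‖ ^ 2 := by
      rw [sub_eq_add_neg, add_eq_max_of_ne (by rw [norm_neg]; exact hm.ne'), norm_neg,
        max_eq_left hm.le, norm_pow]
    exact norm_p_ne_norm_sq (x / y * y)
      (by rw [← h, hxy, norm_mul, this, norm_mul, norm_pow, mul_pow])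
  set u : ℤ_[p] := ⟨x / y, hu⟩
  have hlt : ‖u ^ 2 - m‖ < 1 := by
    refine lt_of_le_of_ne (PadicInt.norm_le_one _) fun h1 => norm_p_ne_norm_sq y ?_
    have h1' : ‖(x / y) ^ 2 - (m : ℚ_[p])‖ = 1 := h1
    rw [← h, hxy, norm_mul, norm_pow, h1', one_mul]
  have : PadicInt.toZMod (u ^ 2 - m) = 0 := by
    rw [← RingHom.mem_ker, PadicInt.ker_toZMod]
    exact PadicInt.mem_nonunits.mpr hlt
  exact ⟨PadicInt.toZMod u, by rw [map_sub, map_pow, sub_eq_zero] at this; rw [← this, sq]⟩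

end Padic

/-- All Hilbert symbols `(n, m)_v` at the places `v` of `ℚ` are `+1`. -/
def IsLocallyQuadraticNorm (m n : ℤ) : Prop :=
  (∀ (p : ℕ) [Fact p.Prime], IsQuadraticNorm (m : ℚ_[p]) (n : ℚ_[p])) ∧
    IsQuadraticNorm (m : ℝ) (n : ℝ)

namespace IsLocallyQuadraticNorm

variable {m n : ℤ}

theorem symm (hn : n ≠ 0) (h : IsLocallyQuadraticNorm m n) : IsLocallyQuadraticNorm n m :=
  ⟨fun p _ => (h.1 p).symm two_ne_zero (by exact_mod_cast hn),
    h.2.symm two_ne_zero (by exact_mod_cast hn)⟩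

theorem iff_of_sq_sub_eq_mul_sq {t s d : ℤ} (h : t ^ 2 - m = n * (s * d ^ 2)) (hn : n ≠ 0)
    (hs : s ≠ 0) (hd : d ≠ 0) : IsLocallyQuadraticNorm m n ↔ IsLocallyQuadraticNorm m s := by
  simp only [IsLocallyQuadraticNorm, isQuadraticNorm_intCast_iff_of_sq_sub_eq_mul_sq h hn hs hd]

theorem isSquare_intCast_zmod (hn : Squarefree n) (h : IsLocallyQuadraticNorm m n) :
    IsSquare (m : ZMod n.natAbs) := by
  refine ZMod.isSquare_intCast_of_squarefree (Int.squarefree_natAbs.mpr hn) m fun p hp => ?_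
  have : Fact p.Prime := ⟨Nat.prime_of_mem_primeFactors hp⟩
  obtain ⟨x, y, hxy⟩ := h.1 p
  have hpn : (p : ℤ) ∣ n := Int.natCast_dvd.mpr (Nat.dvd_of_mem_primeFactors hp)
  have := Padic.isSquare_toZMod_of_norm_eq_norm_p (m := m) (x := x) (y := y)
    (by push_cast; rw [← hxy, Padic.norm_intCast_eq_norm_p_of_squarefree hn hpn])
  rwa [map_intCast] at this

end IsLocallyQuadraticNorm

theorem isQuadraticNorm_of_natAbs_le_one {m n : ℤ} (hm : m ≠ 0) (hm1 : m ≠ 1)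
    (hmn : m.natAbs ≤ n.natAbs) (hn : n.natAbs ≤ 1) (hinf : IsQuadraticNorm (m : ℝ) (n : ℝ)) :
    IsQuadraticNorm (m : ℚ) (n : ℚ) := by
  obtain rfl : m = -1 := by omega
  obtain rfl | rfl : n = 1 ∨ n = -1 := by omega
  · simpa using isQuadraticNorm_sq (-1 : ℚ) 1
  · obtain ⟨x, y, hxy⟩ := hinf
    push_cast at hxy
    nlinarith [sq_nonneg x, sq_nonneg y]

theorem IsLocallyQuadraticNorm.isQuadraticNorm {m n : ℤ} (hm : Squarefree m) (hn : Squarefree n)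
    (h : IsLocallyQuadraticNorm m n) : IsQuadraticNorm (m : ℚ) (n : ℚ) := by
  induction hk : m.natAbs + n.natAbs using Nat.strong_induction_on generalizing m n with
  | _ k ih =>
  wlog hmn : m.natAbs ≤ n.natAbs generalizing m n
  · exact (this hn hm (h.symm hn.ne_zero) (by omega) (by omega)).symm two_ne_zero
      (by exact_mod_cast hm.ne_zero)
  rcases eq_or_ne m 1 with rfl | hm1
  · simpa using isQuadraticNorm_one_left (two_ne_zero : (2 : ℚ) ≠ 0) n
  rcases Nat.lt_or_ge n.natAbs 2 with hn2 | hn2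
  · exact isQuadraticNorm_of_natAbs_le_one hm.ne_zero hm1 hmn (by omega) h.2
  obtain ⟨t, n', hmul, hn', hlt⟩ :=
    Int.exists_sq_sub_eq_mul_of_isSquare hm hm1 hmn hn2 (h.isSquare_intCast_zmod hn)
  obtain ⟨s, d, hs, hd, rfl⟩ := Int.exists_squarefree_mul_sq hn'
  have hsn : s.natAbs < n.natAbs :=
    (Int.natAbs_le_of_dvd_ne_zero (dvd_mul_right s _) hn').trans_lt hlt
  refine (isQuadraticNorm_intCast_iff_of_sq_sub_eq_mul_sq hmul hn.ne_zero hs.ne_zero hd).mpr ?_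
  exact ih _ (by omega) hm hs
    ((IsLocallyQuadraticNorm.iff_of_sq_sub_eq_mul_sq hmul hn.ne_zero hs.ne_zero hd).mp h) rfl

theorem hasse_norm_theorem_quadratic_general (m : ℤ) (hm : Squarefree m)
    (n : ℚ) (hn : n ≠ 0)
    (hfin : ∀ (p : ℕ) [Fact p.Prime], ∃ x y : ℚ_[p], (n : ℚ_[p]) = x ^ 2 - (m : ℚ_[p]) * y ^ 2)
    (hinf : ∃ x y : ℝ, (n : ℝ) = x ^ 2 - (m : ℝ) * y ^ 2) :
    ∃ x y : ℚ, n = x ^ 2 - (m : ℚ) * y ^ 2 := by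
  obtain ⟨s, hs, c, hc, rfl⟩ := Rat.exists_squarefree_mul_sq hn
  have hcast : ∀ (F : Type) [Field F] [CharZero F],
      IsQuadraticNorm (m : F) ((s * c ^ 2 : ℚ) : F) ↔ IsQuadraticNorm (m : F) (s : F) :=
    fun F _ _ => by push_cast; exact isQuadraticNorm_mul_sq_iff (by exact_mod_cast hc)
  have hlocal : IsLocallyQuadraticNorm m s :=
    ⟨fun p _ => (hcast ℚ_[p]).mp (hfin p), (hcast ℝ).mp hinf⟩
  exact (isQuadraticNorm_mul_sq_iff hc).mpr (hlocal.isQuadraticNorm hm hs)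

/-- Hilbert's Satz 102 (Hasse norm theorem for quadratic fields): if `m` is a squarefree
nonsquare integer and the nonzero rational `n` is a norm from `ℚ_v(√m)` at every place `v`
of `ℚ` (i.e. all quadratic Hilbert symbols `(n, m)_v` equal `+1`), then `n` is a global
norm: `n = x² − m·y²` with `x, y ∈ ℚ`. -/
theorem hasse_norm_theorem_quadratic (m : ℤ) (hm : Squarefree m) (hm' : ¬ IsSquare m)
    (n : ℚ) (hn : n ≠ 0)
    (hfin : ∀ (p : ℕ) [Fact p.Prime], ∃ x y : ℚ_[p], (n : ℚ_[p]) = x ^ 2 - (m : ℚ_[p]) * y ^ 2)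
    (hinf : ∃ x y : ℝ, (n : ℝ) = x ^ 2 - (m : ℝ) * y ^ 2) :
    ∃ x y : ℚ, n = x ^ 2 - (m : ℚ) * y ^ 2 :=
  hasse_norm_theorem_quadratic_general m hm n hn hfin hinf
end

section
/- Let ℓ be an odd prime, ζ a primitive ℓ-th root of unity, and for α ∈ ℤ[ζ] with α ≡ 1 mod (1−ζ), define the Kummer logarithmic derivatives ℒ^r(α) ∈ ℤ/ℓℤ by writing α = f(ζ) and taking the r-th derivative of log f(e^v) at v = 0 modulo ℓ. Then ℒ^r(αβ) ≡ ℒ^r(α) + ℒ^r(β) (mod ℓ) for 1 ≤ r ≤ ℓ − 2. -/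
open PowerSeries

/-- Kummer's differential logarithm: for a polynomial `f ∈ ℤ[X]` (representing
`α = f(ζ)`), `kummerL f r` is the `r`-th derivative of `log f(e^v)` at `v = 0`, computed
formally as `(r−1)! · coeff_{r−1} (g'/g)` where `g = f(e^v) ∈ ℚ⟦v⟧`. -/
noncomputable def kummerL (f : Polynomial ℤ) (r : ℕ) : ℚ :=
  ((r - 1).factorial : ℚ) *
    PowerSeries.coeff (R := ℚ) (r - 1)
      (PowerSeries.derivative ℚ (Polynomial.eval₂ (Int.castRingHom (PowerSeries ℚ))
          (PowerSeries.exp ℚ) f) *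
        (Polynomial.eval₂ (Int.castRingHom (PowerSeries ℚ)) (PowerSeries.exp ℚ) f)⁻¹)

/-- `x ≡ 0 (mod ℓ)` for a rational number `x`, in the `ℓ`-adic sense. -/
def RatModCong (ℓ : ℕ) (x : ℚ) : Prop :=
  ∃ a b : ℤ, ¬ (ℓ : ℤ) ∣ b ∧ (b : ℚ) * x = (ℓ : ℚ) * a

/-!
Since `h(ζ) = f(ζ) g(ζ)` and `Φ_ℓ` is the minimal polynomial of `ζ`, we have
`h = f g + Φ_ℓ q`. After substituting `X = e^v`, all series have `ℓ`-integral coefficients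
up to degree `ℓ - 1`, and their constant terms `f(1), g(1), h(1)` are `ℓ`-adic units because
`f ≡ 1 mod (1 - ζ)` forces `f(1) ≡ 1 mod ℓ`. The `k`-th coefficient of `Φ_ℓ(e^v)` is
`(∑_{i<ℓ} i^k) / k!`, which is `≡ 0 mod ℓ` for `k ≤ ℓ - 2`. So `h(e^v) ≡ f(e^v) g(e^v)` up to
degree `ℓ - 2`, and their logarithmic derivatives agree mod `ℓ` up to degree `ℓ - 3`.

A series `A` is `≡ 0 mod ℓ` up to degree `N` when `ℓ⁻¹ • A ∈ integralUpTo ℓ N`.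
-/

def integralAt (ℓ : ℕ) [Fact ℓ.Prime] : Subring ℚ where
  carrier := {x | ¬ ℓ ∣ x.den}
  zero_mem' := by simp [Nat.Prime.ne_one Fact.out]
  one_mem' := by simp [Nat.Prime.ne_one Fact.out]
  add_mem' {x y} hx hy h := (Fact.out : ℓ.Prime).dvd_mul.not.mpr (not_or.mpr ⟨hx, hy⟩)
    (h.trans (Rat.add_den_dvd x y))
  mul_mem' {x y} hx hy h := (Fact.out : ℓ.Prime).dvd_mul.not.mpr (not_or.mpr ⟨hx, hy⟩)
    (h.trans (Rat.mul_den_dvd x y))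
  neg_mem' {x} hx := by simpa using hx

variable {ℓ : ℕ} [Fact ℓ.Prime]

theorem mem_integralAt {x : ℚ} : x ∈ integralAt ℓ ↔ ¬ ℓ ∣ x.den := Iff.rfl

theorem inv_intCast_mem_integralAt {m : ℤ} (hm : ¬ (ℓ : ℤ) ∣ m) :
    (m : ℚ)⁻¹ ∈ integralAt ℓ := by
  have hm0 : m ≠ 0 := by rintro rfl; exact hm (dvd_zero _)
  rwa [mem_integralAt, Rat.inv_intCast_den, if_neg hm0, ← Int.natCast_dvd]

theorem inv_factorial_mem_integralAt {n : ℕ} (hn : n < ℓ) :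
    (n.factorial : ℚ)⁻¹ ∈ integralAt ℓ := by
  rw [mem_integralAt, Rat.inv_natCast_den_of_pos n.factorial_pos,
    (Fact.out : ℓ.Prime).dvd_factorial]
  omega

theorem ratModCong_of_inv_mul_mem {x : ℚ} (hx : (ℓ : ℚ)⁻¹ * x ∈ integralAt ℓ) :
    RatModCong ℓ x := by
  have hℓ : (ℓ : ℚ) ≠ 0 := Nat.cast_ne_zero.mpr (Fact.out : ℓ.Prime).ne_zero
  refine ⟨((ℓ : ℚ)⁻¹ * x).num, ((ℓ : ℚ)⁻¹ * x).den, by exact_mod_cast hx, ?_⟩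
  rw [← Rat.den_mul_eq_num]
  field_simp
  push_cast
  ring

def integralUpTo (ℓ : ℕ) [Fact ℓ.Prime] (N : ℕ) : Subring ℚ⟦X⟧ where
  carrier := {A | ∀ k ≤ N, coeff k A ∈ integralAt ℓ}
  zero_mem' k _ := by simp [zero_mem]
  one_mem' k _ := by rw [coeff_one]; split_ifs <;> simp [zero_mem, one_mem]
  add_mem' hA hB k hk := by rw [map_add]; exact add_mem (hA k hk) (hB k hk)
  mul_mem' {A B} hA hB k hk := by
    rw [coeff_mul]
    refine sum_mem fun p hp => mul_mem (hA _ ?_) (hB _ ?_) <;>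
      linarith [Finset.HasAntidiagonal.mem_antidiagonal.mp hp]
  neg_mem' hA k hk := by rw [map_neg]; exact neg_mem (hA k hk)

theorem integralUpTo_antitone : Antitone (integralUpTo ℓ) :=
  fun _ _ hMN _ hA k hk => hA k (hk.trans hMN)

theorem derivative_mem_integralUpTo {N : ℕ} {A : ℚ⟦X⟧} (hA : A ∈ integralUpTo ℓ (N + 1)) :
    derivative ℚ A ∈ integralUpTo ℓ N := fun k hk => by
  rw [coeff_derivative]
  exact mul_mem (hA (k + 1) (by omega)) (add_mem (natCast_mem _ k) (one_mem _))

theorem inv_mem_integralUpTo {N : ℕ} {A : ℚ⟦X⟧} {m : ℤ} (hA : A ∈ integralUpTo ℓ N)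
    (hAm : constantCoeff A = m) (hm : ¬ (ℓ : ℤ) ∣ m) : A⁻¹ ∈ integralUpTo ℓ N := by
  intro k hk
  induction k using Nat.strong_induction_on with
  | _ k ih =>
    rw [coeff_inv, hAm]
    split_ifs
    · exact inv_intCast_mem_integralAt hm
    refine mul_mem (neg_mem (inv_intCast_mem_integralAt hm)) (sum_mem fun p hp => ?_)
    have hp := Finset.HasAntidiagonal.mem_antidiagonal.mp hp
    split_ifs
    · exact mul_mem (hA p.1 (by omega)) (ih p.2 (by omega) (by omega))
    · exact zero_mem _

theorem exp_mem_integralUpTo {N : ℕ} (hN : N < ℓ) : exp ℚ ∈ integralUpTo ℓ N := fun k hk => by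
  rw [coeff_exp, one_div, ← Rat.cast_natCast, ← Rat.cast_inv, Rat.cast_id]
  exact inv_factorial_mem_integralAt (by omega)

noncomputable def evalExp : Polynomial ℤ →+* ℚ⟦X⟧ :=
  Polynomial.eval₂RingHom (Int.castRingHom _) (exp ℚ)

theorem evalExp_mem_integralUpTo {N : ℕ} (hN : N < ℓ) (p : Polynomial ℤ) :
    evalExp p ∈ integralUpTo ℓ N := by
  induction p using Polynomial.induction_on' with
  | add p q hp hq => rw [map_add]; exact add_mem hp hq
  | monomial n a =>
    simp only [evalExp, Polynomial.coe_eval₂RingHom, Polynomial.eval₂_monomial, eq_intCast]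
    exact mul_mem (intCast_mem _ a) (pow_mem (exp_mem_integralUpTo hN) n)

theorem constantCoeff_evalExp (p : Polynomial ℤ) : constantCoeff (evalExp p) = p.eval 1 := by
  rw [evalExp, Polynomial.coe_eval₂RingHom, Polynomial.hom_eval₂, constantCoeff_exp,
    Polynomial.eval₂_at_one]
  exact eq_intCast _ _

theorem natCast_dvd_sum_range_pow {n : ℕ} (hn : n + 2 ≤ ℓ) :
    (ℓ : ℤ) ∣ ∑ i ∈ Finset.range ℓ, (i : ℤ) ^ n := by
  rw [← ZMod.intCast_zmod_eq_zero_iff_dvd]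
  push_cast
  calc ∑ i ∈ Finset.range ℓ, (i : ZMod ℓ) ^ n = ∑ x : ZMod ℓ, x ^ n :=
        Finset.sum_nbij' (fun i => (i : ZMod ℓ)) ZMod.val (by simp) (by simp [ZMod.val_lt])
          (fun i hi => ZMod.val_natCast_of_lt (Finset.mem_range.mp hi)) (by simp) (by simp)
    _ = 0 := FiniteField.sum_pow_lt_card_sub_one (K := ZMod ℓ) n (by rw [ZMod.card]; omega)

theorem coeff_evalExp_cyclotomic (k : ℕ) :
    coeff k (evalExp (Polynomial.cyclotomic ℓ ℤ)) =
      ((∑ i ∈ Finset.range ℓ, (i : ℤ) ^ k : ℤ) : ℚ) * (k.factorial : ℚ)⁻¹ := by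
  simp only [Polynomial.cyclotomic_prime, map_sum, map_pow, evalExp, Polynomial.coe_eval₂RingHom,
    Polynomial.eval₂_X, exp_pow_eq_rescale_exp, coeff_rescale, coeff_exp]
  push_cast
  simp [Finset.sum_mul]

theorem inv_smul_evalExp_cyclotomic_mem :
    (ℓ : ℚ)⁻¹ • evalExp (Polynomial.cyclotomic ℓ ℤ) ∈ integralUpTo ℓ (ℓ - 2) := fun k hk => by
  have h2 := (Fact.out : ℓ.Prime).two_le
  obtain ⟨m, hm⟩ := natCast_dvd_sum_range_pow (ℓ := ℓ) (n := k) (by omega)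
  have hℓ : (ℓ : ℚ) ≠ 0 := by positivity
  rw [coeff_smul, coeff_evalExp_cyclotomic, hm, smul_eq_mul, Int.cast_mul, Int.cast_natCast,
    ← mul_assoc, ← mul_assoc, inv_mul_cancel₀ hℓ, one_mul]
  exact mul_mem (intCast_mem _ m) (inv_factorial_mem_integralAt (by omega))

namespace PowerSeries

variable {k : Type*} [Field k]

noncomputable def logDerivative (A : k⟦X⟧) : k⟦X⟧ := derivative k A * A⁻¹

theorem logDerivative_mul {A B : k⟦X⟧} (hA : constantCoeff A ≠ 0) (hB : constantCoeff B ≠ 0) :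
    logDerivative (A * B) = logDerivative A + logDerivative B := by
  have hAA := A.mul_inv_cancel hA
  have hBB := B.mul_inv_cancel hB
  simp only [logDerivative, Derivation.leibniz, smul_eq_mul, PowerSeries.mul_inv_rev]
  linear_combination (derivative k B * B⁻¹) * hAA + (derivative k A * A⁻¹) * hBB

theorem logDerivative_sub_logDerivative {A B : k⟦X⟧} (hA : constantCoeff A ≠ 0)
    (hB : constantCoeff B ≠ 0) :
    logDerivative A - logDerivative B =
      (derivative k A * B - A * derivative k B) * (A⁻¹ * B⁻¹) := by
  have hAA := A.mul_inv_cancel hA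
  have hBB := B.mul_inv_cancel hB
  unfold logDerivative
  linear_combination (derivative k B * B⁻¹) * hAA - (derivative k A * A⁻¹) * hBB

end PowerSeries

theorem kummerL_succ (f : Polynomial ℤ) (s : ℕ) :
    kummerL f (s + 1) = s.factorial * coeff s (logDerivative (evalExp f)) := rfl

theorem constantCoeff_evalExp_ne_zero {p : Polynomial ℤ} {m : ℤ} (hp : ¬ m ∣ p.eval 1) :
    constantCoeff (evalExp p) ≠ 0 := by
  rw [constantCoeff_evalExp, Int.cast_ne_zero]
  rintro h
  exact hp (h ▸ dvd_zero _)

theorem inv_smul_logDerivative_evalExp_sub_mem {N : ℕ} (hN : N + 1 < ℓ) {p q : Polynomial ℤ}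
    (hpq : (ℓ : ℚ)⁻¹ • evalExp (p - q) ∈ integralUpTo ℓ (N + 1))
    (hp : ¬ (ℓ : ℤ) ∣ p.eval 1) (hq : ¬ (ℓ : ℤ) ∣ q.eval 1) :
    (ℓ : ℚ)⁻¹ • (logDerivative (evalExp p) - logDerivative (evalExp q)) ∈ integralUpTo ℓ N := by
  set P := evalExp p
  set Q := evalExp q
  have hnum : (ℓ : ℚ)⁻¹ • (derivative ℚ P * Q - P * derivative ℚ Q) =
      derivative ℚ ((ℓ : ℚ)⁻¹ • evalExp (p - q)) * Q -
        (ℓ : ℚ)⁻¹ • evalExp (p - q) * derivative ℚ Q := by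
    simp only [map_sub, Derivation.map_smul, smul_mul_assoc, ← smul_sub]
    congr 1
    ring
  have hP : P ∈ integralUpTo ℓ (N + 1) := evalExp_mem_integralUpTo hN p
  have hQ : Q ∈ integralUpTo ℓ (N + 1) := evalExp_mem_integralUpTo hN q
  rw [logDerivative_sub_logDerivative (constantCoeff_evalExp_ne_zero hp)
    (constantCoeff_evalExp_ne_zero hq), ← smul_mul_assoc, hnum]
  refine mul_mem (sub_mem (mul_mem (derivative_mem_integralUpTo hpq) ?_)
    (mul_mem ?_ (derivative_mem_integralUpTo hQ))) (mul_mem ?_ ?_)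
  · exact integralUpTo_antitone N.le_succ hQ
  · exact integralUpTo_antitone N.le_succ hpq
  · exact inv_mem_integralUpTo (integralUpTo_antitone N.le_succ hP) (constantCoeff_evalExp p) hp
  · exact inv_mem_integralUpTo (integralUpTo_antitone N.le_succ hQ) (constantCoeff_evalExp q) hq

theorem exists_aeval_sub_one_eq_of_mul {R : Type*} [CommRing R] {ζ : R} {f g h : Polynomial ℤ}
    (hf : ∃ u : Polynomial ℤ, Polynomial.aeval ζ f - 1 = (1 - ζ) * Polynomial.aeval ζ u)
    (hg : ∃ u : Polynomial ℤ, Polynomial.aeval ζ g - 1 = (1 - ζ) * Polynomial.aeval ζ u)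
    (hh : Polynomial.aeval ζ h = Polynomial.aeval ζ f * Polynomial.aeval ζ g) :
    ∃ u : Polynomial ℤ, Polynomial.aeval ζ h - 1 = (1 - ζ) * Polynomial.aeval ζ u := by
  obtain ⟨u, hu⟩ := hf
  obtain ⟨v, hv⟩ := hg
  refine ⟨u * g + v, ?_⟩
  rw [map_add, map_mul, hh]
  linear_combination Polynomial.aeval ζ g * hu + hv

section Cyclotomic

variable {K : Type*} [Field K] [CharZero K]

theorem cyclotomic_dvd_of_aeval_eq_zero {n : ℕ} {ζ : K} (hζ : IsPrimitiveRoot ζ n) (hn : 0 < n)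
    {p : Polynomial ℤ} (hp : Polynomial.aeval ζ p = 0) : Polynomial.cyclotomic n ℤ ∣ p := by
  rw [Polynomial.cyclotomic_eq_minpoly hζ hn]
  exact minpoly.isIntegrallyClosed_dvd (hζ.isIntegral hn) hp

theorem not_dvd_eval_one {ζ : K} (hζ : IsPrimitiveRoot ζ ℓ)
    {p : Polynomial ℤ}
    (hp : ∃ u : Polynomial ℤ, Polynomial.aeval ζ p - 1 = (1 - ζ) * Polynomial.aeval ζ u) :
    ¬ (ℓ : ℤ) ∣ p.eval 1 := by
  obtain ⟨u, hu⟩ := hp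
  obtain ⟨s, hs⟩ : Polynomial.cyclotomic ℓ ℤ ∣ p - 1 - (1 - Polynomial.X) * u := by
    refine cyclotomic_dvd_of_aeval_eq_zero hζ (Fact.out : ℓ.Prime).pos ?_
    simp only [map_sub, map_mul, map_one, Polynomial.aeval_X]
    linear_combination hu
  have hs1 := congrArg (Polynomial.eval 1) hs
  simp only [Polynomial.eval_sub, Polynomial.eval_one, Polynomial.eval_mul, Polynomial.eval_X,
    sub_self, zero_mul, Polynomial.eval_one_cyclotomic_prime] at hs1
  intro hdvd
  exact (Nat.prime_iff_prime_int.mp Fact.out).not_dvd_one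
    ((dvd_sub hdvd (Dvd.intro _ hs1.symm)).trans (by simp))

end Cyclotomic

theorem kummerL_additive_general (ℓ : ℕ) (hℓ : ℓ.Prime)
    (ζ : ℂ) (hζ : IsPrimitiveRoot ζ ℓ)
    (f g h : Polynomial ℤ)
    (hfcong : ∃ u : Polynomial ℤ,
      Polynomial.aeval ζ f - 1 = (1 - ζ) * Polynomial.aeval ζ u)
    (hgcong : ∃ u : Polynomial ℤ,
      Polynomial.aeval ζ g - 1 = (1 - ζ) * Polynomial.aeval ζ u)
    (hmul : Polynomial.aeval ζ h = Polynomial.aeval ζ f * Polynomial.aeval ζ g)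
    (r : ℕ) (hr1 : 1 ≤ r) (hr2 : r ≤ ℓ - 2) :
    RatModCong ℓ (kummerL h r - kummerL f r - kummerL g r) := by
  have : Fact ℓ.Prime := ⟨hℓ⟩
  obtain ⟨s, rfl⟩ : ∃ s, r = s + 1 := ⟨r - 1, by omega⟩
  obtain ⟨q, hq⟩ : Polynomial.cyclotomic ℓ ℤ ∣ h - f * g :=
    cyclotomic_dvd_of_aeval_eq_zero hζ hℓ.pos (by rw [map_sub, map_mul, hmul, sub_self])
  have hf := not_dvd_eval_one hζ hfcong
  have hg := not_dvd_eval_one hζ hgcong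
  have hh := not_dvd_eval_one hζ (exists_aeval_sub_one_eq_of_mul hfcong hgcong hmul)
  have hfg : ¬ (ℓ : ℤ) ∣ (f * g).eval 1 := by
    rw [Polynomial.eval_mul]
    exact (Nat.prime_iff_prime_int.mp hℓ).not_dvd_mul hf hg
  have hcong : (ℓ : ℚ)⁻¹ • evalExp (h - f * g) ∈ integralUpTo ℓ (s + 1) := by
    rw [hq, map_mul, ← smul_mul_assoc]
    exact mul_mem (integralUpTo_antitone (by omega) inv_smul_evalExp_cyclotomic_mem)
      (evalExp_mem_integralUpTo (by omega) q)
  have key := inv_smul_logDerivative_evalExp_sub_mem (by omega) hcong hh hfg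
  rw [map_mul, logDerivative_mul (constantCoeff_evalExp_ne_zero hf)
    (constantCoeff_evalExp_ne_zero hg)] at key
  refine ratModCong_of_inv_mul_mem ?_
  convert mul_mem (natCast_mem _ s.factorial) (key s le_rfl) using 1
  simp only [kummerL_succ, coeff_smul, map_sub, map_add, smul_eq_mul]
  ring

/-- Additivity of Kummer's differential logarithms:
`ℒ^r(αβ) ≡ ℒ^r(α) + ℒ^r(β) (mod ℓ)` for `1 ≤ r ≤ ℓ − 2`, where `α = f(ζ)`, `β = g(ζ)`
are elements of `ℤ[ζ]` congruent to `1 mod (1 − ζ)` and `αβ = h(ζ)`. -/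
theorem kummerL_additive (ℓ : ℕ) (hℓ : ℓ.Prime) (hodd : ℓ ≠ 2)
    (ζ : ℂ) (hζ : IsPrimitiveRoot ζ ℓ)
    (f g h : Polynomial ℤ)
    (hf1 : Polynomial.eval 1 f ≠ 0) (hg1 : Polynomial.eval 1 g ≠ 0)
    (hh1 : Polynomial.eval 1 h ≠ 0)
    (hfcong : ∃ u : Polynomial ℤ,
      Polynomial.aeval ζ f - 1 = (1 - ζ) * Polynomial.aeval ζ u)
    (hgcong : ∃ u : Polynomial ℤ,
      Polynomial.aeval ζ g - 1 = (1 - ζ) * Polynomial.aeval ζ u)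
    (hmul : Polynomial.aeval ζ h = Polynomial.aeval ζ f * Polynomial.aeval ζ g)
    (r : ℕ) (hr1 : 1 ≤ r) (hr2 : r ≤ ℓ - 2) :
    RatModCong ℓ (kummerL h r - kummerL f r - kummerL g r) :=
  kummerL_additive_general ℓ hℓ ζ hζ f g h hfcong hgcong hmul r hr1 hr2
end
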